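/- arXiv:1404.4209 — 3 statements merged into one kernel-verified Lean document; each statement's English description precedes it below -/
import Mathlib

section
/- Let p be a prime, let F be a complete subfield of ℂ_p, let r > 0, and let f be a function analytic on the closed ball {x ∈ F : |x|_p ≤ r}. Let s, t be real numbers with 0 < s ≤ t ≤ r. If f has at least k zeros (counted with multiplicity) in the closed ball {x ∈ F : |x|_p ≤ s}, in the sense that f(z) = (z − a₁)⋯(z − a_k)·g(z) for some a₁, …, a_k ∈ F with |a_i|_p ≤ s and some function g analytic on the closed ball {x ∈ F : |x|_p ≤ r}, then |f|_s ≤ (s/t)^k · |f|_t. -/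
/-!
`ℂ_p` is modelled by a complete nonarchimedean normed field `Cp` with `‖p‖ = p⁻¹`, and the
complete subfield `F` by a subfield `K` of `Cp`. A function analytic on the closed ball of
radius `r` is given by its coefficient sequence `a` with `‖a n‖ * r ^ n → 0`, i.e. a power series
restricted at `r`; its value at `z` is `∑' n, a n * z ^ n`.

The points `p ^ M ∈ K` accumulate at `0`, so by the identity theorem the factorization
`f = (X - b₁)⋯(X - b_k) * g` holds for the power series themselves. The Gauss norm at radius `ρ`
is ultrametric, with `|X h|_ρ = ρ |h|_ρ` and `|b h|_ρ = ‖b‖ |h|_ρ`; hence multiplying by `X - b`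
multiplies it by at most `ρ` when `‖b‖ ≤ ρ` and by at least `ρ` when `‖b‖ < ρ`. For `s < t` this
gives `|f|_s ≤ s^k |g|_s ≤ s^k |g|_t ≤ (s/t)^k |f|_t`.
-/

open Filter

/-- The Gauss norm `|f|_r = sup_n ‖a n‖ * rⁿ` of the analytic function with
coefficient sequence `a`. -/
noncomputable def gaussNorm {Cp : Type*} [NormedField Cp] (a : ℕ → Cp) (r : ℝ) : ℝ :=
  ⨆ n, ‖a n‖ * r ^ n

open PowerSeries Topology

namespace PowerSeries

section NormedRing

variable {R : Type*} [NormedRing R] {f : R⟦X⟧} {ρ r : ℝ}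

theorem IsRestricted.mono (hf : IsRestricted r f) (hρ : 0 ≤ ρ) (hρr : ρ ≤ r) :
    IsRestricted ρ f := by
  rw [isRestricted_iff'] at hf ⊢
  exact squeeze_zero (fun n => by positivity)
    (fun n => mul_le_mul_of_nonneg_left (pow_le_pow_left₀ hρ hρr n) (norm_nonneg _)) hf

theorem IsRestricted.hasGaussNorm (hf : IsRestricted ρ f) : HasGaussNorm (‖·‖) ρ f :=
  ((isRestricted_iff' ρ f).mp hf).bddAbove_range

theorem gaussNorm_norm_nonneg (ρ : ℝ) (f : R⟦X⟧) : 0 ≤ gaussNorm (‖·‖) ρ f :=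
  gaussNorm_nonneg _ _ _ fun _ => norm_nonneg _

theorem isRestricted_X (ρ : ℝ) : IsRestricted ρ (X : R⟦X⟧) :=
  X_eq (R := R) ▸ isRestricted_monomial ρ 1 1

theorem isRestricted_X_sub_C (ρ : ℝ) (b : R) : IsRestricted ρ (X - C b) := by
  rw [sub_eq_add_neg]
  exact isRestricted.add ρ (isRestricted_X ρ) (isRestricted.neg ρ (isRestricted_C ρ b))

theorem IsRestricted.gaussNorm_add_le_max [IsUltrametricDist R] {g : R⟦X⟧} (hρ : 0 ≤ ρ)
    (hf : IsRestricted ρ f) (hg : IsRestricted ρ g) :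
    gaussNorm (‖·‖) ρ (f + g) ≤ max (gaussNorm (‖·‖) ρ f) (gaussNorm (‖·‖) ρ g) :=
  PowerSeries.gaussNorm_add_le_max _ _ _ _ hρ (fun _ => norm_nonneg _)
    IsUltrametricDist.norm_add_le_max hf.hasGaussNorm hg.hasGaussNorm

theorem gaussNorm_mono (hρ : 0 ≤ ρ) (hρr : ρ ≤ r) (hf : HasGaussNorm (‖·‖) r f) :
    gaussNorm (‖·‖) ρ f ≤ gaussNorm (‖·‖) r f := by
  rw [gaussNorm_eq, gaussNorm_eq]
  exact ciSup_le fun n => (mul_le_mul_of_nonneg_left (pow_le_pow_left₀ hρ hρr n)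
    (norm_nonneg _)).trans (le_ciSup hf n)

theorem gaussNorm_X_mul (hρ : 0 ≤ ρ) (hf : HasGaussNorm (‖·‖) ρ f) :
    gaussNorm (‖·‖) ρ (X * f) = ρ * gaussNorm (‖·‖) ρ f := by
  rw [gaussNorm_eq, gaussNorm_eq]
  have hterm : ∀ n, ‖coeff n (X * f)‖ * ρ ^ n ≤ ρ * ⨆ n, ‖coeff n f‖ * ρ ^ n := by
    rintro (_ | n)
    · simpa using mul_nonneg hρ (Real.iSup_nonneg fun n => by positivity)
    · rw [coeff_succ_X_mul, pow_succ', mul_left_comm]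
      exact mul_le_mul_of_nonneg_left (le_ciSup hf n) hρ
  refine le_antisymm (ciSup_le hterm) ?_
  rw [Real.mul_iSup_of_nonneg hρ]
  refine ciSup_le fun n => ?_
  have hXf : BddAbove (Set.range fun n => ‖coeff n (X * f)‖ * ρ ^ n) :=
    ⟨_, Set.forall_mem_range.mpr hterm⟩
  calc ρ * (‖coeff n f‖ * ρ ^ n) = ‖coeff (n + 1) (X * f)‖ * ρ ^ (n + 1) := by
        rw [coeff_succ_X_mul, pow_succ']; ring
    _ ≤ ⨆ n, ‖coeff n (X * f)‖ * ρ ^ n := le_ciSup hXf (n + 1)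

end NormedRing

section NormedField

variable {𝕜 : Type*} [NormedField 𝕜] {f : 𝕜⟦X⟧} {ρ r : ℝ} {b z : 𝕜}

theorem gaussNorm_C_mul (b : 𝕜) (f : 𝕜⟦X⟧) (ρ : ℝ) :
    gaussNorm (‖·‖) ρ (C b * f) = ‖b‖ * gaussNorm (‖·‖) ρ f := by
  simp only [gaussNorm_eq, coeff_C_mul, norm_mul, Real.mul_iSup_of_nonneg (norm_nonneg b),
    mul_assoc]

theorem tsum_coeff_X_sub_C_mul_mul_pow (b : 𝕜) (hf : Summable fun n => coeff n f * z ^ n) :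
    ∑' n, coeff n ((X - C b) * f) * z ^ n = (z - b) * ∑' n, coeff n f * z ^ n := by
  have hX : HasSum (fun n => coeff n (X * f) * z ^ n) (z * ∑' n, coeff n f * z ^ n) := by
    rw [← hasSum_nat_add_iff' 1]
    simpa [coeff_succ_X_mul, pow_succ', mul_assoc, mul_left_comm z] using hf.hasSum.mul_left z
  have hsplit : (fun n => coeff n ((X - C b) * f) * z ^ n) =
      fun n => coeff n (X * f) * z ^ n - b * (coeff n f * z ^ n) := by
    funext n
    rw [sub_mul, map_sub, coeff_C_mul]
    ring
  rw [hsplit, (hX.sub (hf.hasSum.mul_left b)).tsum_eq]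
  ring

variable [IsUltrametricDist 𝕜]

theorem isRestricted_prod_X_sub_C {ι : Type*} (s : Finset ι) (b : ι → 𝕜) (ρ : ℝ) :
    IsRestricted ρ (∏ i ∈ s, (X - C (b i))) :=
  show _ ∈ IsRestricted.subring ρ from
    Subring.prod_mem _ fun i _ => isRestricted_X_sub_C ρ (b i)

theorem gaussNorm_X_sub_C_mul_le (hρ : 0 ≤ ρ) (hb : ‖b‖ ≤ ρ) (hf : IsRestricted ρ f) :
    gaussNorm (‖·‖) ρ ((X - C b) * f) ≤ ρ * gaussNorm (‖·‖) ρ f := by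
  calc gaussNorm (‖·‖) ρ ((X - C b) * f) = gaussNorm (‖·‖) ρ (X * f + C (-b) * f) := by
        rw [map_neg, sub_eq_add_neg, add_mul, neg_mul]
    _ ≤ max (gaussNorm (‖·‖) ρ (X * f)) (gaussNorm (‖·‖) ρ (C (-b) * f)) :=
        (isRestricted.mul ρ (isRestricted_X ρ) hf).gaussNorm_add_le_max hρ
          (isRestricted.mul ρ (isRestricted_C ρ (-b)) hf)
    _ = max (ρ * gaussNorm (‖·‖) ρ f) (‖b‖ * gaussNorm (‖·‖) ρ f) := by
        rw [gaussNorm_X_mul hρ hf.hasGaussNorm, gaussNorm_C_mul, norm_neg]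
    _ ≤ ρ * gaussNorm (‖·‖) ρ f :=
        max_le le_rfl (mul_le_mul_of_nonneg_right hb (gaussNorm_norm_nonneg ρ f))

/-- Read the ultrametric inequality for `X * f = (X - C b) * f + C b * f` backwards: the term
`C b * f` is too small to carry the Gauss norm of `X * f` because `‖b‖ < ρ`. -/
theorem mul_gaussNorm_le_gaussNorm_X_sub_C_mul (hb : ‖b‖ < ρ) (hf : IsRestricted ρ f) :
    ρ * gaussNorm (‖·‖) ρ f ≤ gaussNorm (‖·‖) ρ ((X - C b) * f) := by
  have hρ : 0 ≤ ρ := (norm_nonneg b).trans hb.le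
  have key : ρ * gaussNorm (‖·‖) ρ f ≤
      max (gaussNorm (‖·‖) ρ ((X - C b) * f)) (‖b‖ * gaussNorm (‖·‖) ρ f) := by
    rw [← gaussNorm_X_mul hρ hf.hasGaussNorm, ← gaussNorm_C_mul,
      show X * f = (X - C b) * f + C b * f by ring]
    exact (isRestricted.mul ρ (isRestricted_X_sub_C ρ b) hf).gaussNorm_add_le_max hρ
      (isRestricted.mul ρ (isRestricted_C ρ b) hf)
  rcases le_max_iff.mp key with h | h
  · exact h
  · have hf0 : gaussNorm (‖·‖) ρ f = 0 :=
      le_antisymm (by nlinarith [gaussNorm_norm_nonneg ρ f]) (gaussNorm_norm_nonneg ρ f)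
    rw [hf0, mul_zero]
    exact gaussNorm_norm_nonneg ρ _

variable {ι : Type*} {s : Finset ι} {b : ι → 𝕜}

theorem gaussNorm_prod_X_sub_C_mul_le_pow_mul (hρ : 0 ≤ ρ) (hb : ∀ i ∈ s, ‖b i‖ ≤ ρ)
    (hf : IsRestricted ρ f) :
    gaussNorm (‖·‖) ρ ((∏ i ∈ s, (X - C (b i))) * f) ≤ ρ ^ s.card * gaussNorm (‖·‖) ρ f := by
  classical
  induction s using Finset.induction_on with
  | empty => simp
  | insert a s ha ih =>
    rw [Finset.prod_insert ha, mul_assoc, Finset.card_insert_of_notMem ha, pow_succ', mul_assoc]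
    calc _ ≤ ρ * gaussNorm (‖·‖) ρ ((∏ i ∈ s, (X - C (b i))) * f) :=
          gaussNorm_X_sub_C_mul_le hρ (hb a (s.mem_insert_self a))
            (isRestricted.mul ρ (isRestricted_prod_X_sub_C s b ρ) hf)
      _ ≤ _ := mul_le_mul_of_nonneg_left
          (ih fun i hi => hb i (Finset.mem_insert_of_mem hi)) hρ

theorem pow_mul_gaussNorm_le_gaussNorm_prod_X_sub_C_mul (hb : ∀ i ∈ s, ‖b i‖ < ρ)
    (hf : IsRestricted ρ f) :
    ρ ^ s.card * gaussNorm (‖·‖) ρ f ≤ gaussNorm (‖·‖) ρ ((∏ i ∈ s, (X - C (b i))) * f) := by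
  classical
  induction s using Finset.induction_on with
  | empty => simp
  | insert a s ha ih =>
    have hρ : 0 ≤ ρ := (norm_nonneg _).trans (hb a (s.mem_insert_self a)).le
    rw [Finset.prod_insert ha, mul_assoc, Finset.card_insert_of_notMem ha, pow_succ', mul_assoc]
    calc _ ≤ ρ * gaussNorm (‖·‖) ρ ((∏ i ∈ s, (X - C (b i))) * f) :=
          mul_le_mul_of_nonneg_left (ih fun i hi => hb i (Finset.mem_insert_of_mem hi)) hρ
      _ ≤ _ := mul_gaussNorm_le_gaussNorm_X_sub_C_mul (hb a (s.mem_insert_self a))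
          (isRestricted.mul ρ (isRestricted_prod_X_sub_C s b ρ) hf)

theorem gaussNorm_prod_X_sub_C_mul_le {σ τ : ℝ} (hσ : 0 < σ) (hστ : σ ≤ τ)
    (hb : ∀ i ∈ s, ‖b i‖ ≤ σ) (hf : IsRestricted τ f) :
    gaussNorm (‖·‖) σ ((∏ i ∈ s, (X - C (b i))) * f) ≤
      (σ / τ) ^ s.card * gaussNorm (‖·‖) τ ((∏ i ∈ s, (X - C (b i))) * f) := by
  have hτ : 0 < τ := hσ.trans_le hστ
  rcases hστ.eq_or_lt with rfl | hστ
  · simp [div_self hτ.ne']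
  calc gaussNorm (‖·‖) σ ((∏ i ∈ s, (X - C (b i))) * f)
      ≤ σ ^ s.card * gaussNorm (‖·‖) σ f :=
        gaussNorm_prod_X_sub_C_mul_le_pow_mul hσ.le hb (hf.mono hσ.le hστ.le)
    _ ≤ σ ^ s.card * gaussNorm (‖·‖) τ f := by
        gcongr
        exact gaussNorm_mono hσ.le hστ.le hf.hasGaussNorm
    _ ≤ σ ^ s.card * (gaussNorm (‖·‖) τ ((∏ i ∈ s, (X - C (b i))) * f) / τ ^ s.card) := by
        gcongr
        rw [le_div_iff₀ (by positivity), mul_comm]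
        exact pow_mul_gaussNorm_le_gaussNorm_prod_X_sub_C_mul
          (fun i hi => (hb i hi).trans_lt hστ) hf
    _ = _ := by rw [div_pow]; ring

theorem IsRestricted.summable [CompleteSpace 𝕜] (hf : IsRestricted r f) (hz : ‖z‖ ≤ r) :
    Summable fun n => coeff n f * z ^ n := by
  refine NonarchimedeanAddGroup.summable_of_tendsto_cofinite_zero ?_
  rw [Nat.cofinite_eq_atTop, tendsto_zero_iff_norm_tendsto_zero]
  refine squeeze_zero (fun n => norm_nonneg _) (fun n => ?_) ((isRestricted_iff' r f).mp hf)
  rw [norm_mul, norm_pow]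
  exact mul_le_mul_of_nonneg_left (pow_le_pow_left₀ (norm_nonneg _) hz n) (norm_nonneg _)

theorem tsum_coeff_prod_X_sub_C_mul_mul_pow [CompleteSpace 𝕜] (hf : IsRestricted r f)
    (hz : ‖z‖ ≤ r) :
    ∑' n, coeff n ((∏ i ∈ s, (X - C (b i))) * f) * z ^ n =
      (∏ i ∈ s, (z - b i)) * ∑' n, coeff n f * z ^ n := by
  classical
  induction s using Finset.induction_on with
  | empty => simp
  | insert a s ha ih =>
    rw [Finset.prod_insert ha, Finset.prod_insert ha, mul_assoc, mul_assoc,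
      tsum_coeff_X_sub_C_mul_mul_pow _
        ((isRestricted.mul r (isRestricted_prod_X_sub_C s b r) hf).summable hz), ih]

end NormedField

section NontriviallyNormedField

variable {𝕜 : Type*} [NontriviallyNormedField 𝕜] [CompleteSpace 𝕜] {f g : 𝕜⟦X⟧} {r : ℝ}

theorem IsRestricted.eq_zero_of_frequently_tsum_eq_zero (hr : 0 < r) (hf : IsRestricted r f)
    (h : ∃ᶠ z in 𝓝[≠] 0, ∑' n, coeff n f * z ^ n = 0) : f = 0 := by
  set p := FormalMultilinearSeries.ofScalars 𝕜 fun n => coeff n f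
  have hrad : (r.toNNReal : ENNReal) ≤ p.radius :=
    p.le_radius_of_tendsto (l := 0) <| by
      simpa [p, FormalMultilinearSeries.ofScalars_norm, Real.coe_toNNReal _ hr.le]
        using (isRestricted_iff' r f).mp hf
  have hp := p.hasFPowerSeriesOnBall
    ((ENNReal.coe_pos.mpr (Real.toNNReal_pos.mpr hr)).trans_le hrad)
  have hp0 : p = 0 := hp.hasFPowerSeriesAt.eq_zero_of_eventually
    (hp.analyticAt.frequently_zero_iff_eventually_zero.mp
      (h.mono fun z hz => (FormalMultilinearSeries.ofScalars_sum_eq _ z).trans hz))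
  ext n
  simpa using congrFun ((FormalMultilinearSeries.ofScalars_series_eq_zero 𝕜).mp hp0) n

theorem IsRestricted.eq_of_frequently_tsum_eq [IsUltrametricDist 𝕜] {S : Set 𝕜} (hr : 0 < r)
    (hf : IsRestricted r f) (hg : IsRestricted r g) (hS : ∃ᶠ z in 𝓝[≠] 0, z ∈ S)
    (hfg : ∀ z ∈ S, ‖z‖ ≤ r → ∑' n, coeff n f * z ^ n = ∑' n, coeff n g * z ^ n) : f = g := by
  have hfg' : IsRestricted r (f - g) := by
    rw [sub_eq_add_neg]
    exact isRestricted.add r hf (isRestricted.neg r hg)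
  rw [← sub_eq_zero]
  refine hfg'.eq_zero_of_frequently_tsum_eq_zero hr ?_
  have hball : ∀ᶠ z in 𝓝[≠] (0 : 𝕜), ‖z‖ ≤ r := nhdsWithin_le_nhds <|
    mem_of_superset (Metric.closedBall_mem_nhds 0 hr) fun _ => mem_closedBall_zero_iff.mp
  refine (hS.and_eventually hball).mono fun z ⟨hzS, hzr⟩ => ?_
  simp only [map_sub, sub_mul]
  rw [(hf.summable hzr).tsum_sub (hg.summable hzr), hfg z hzS hzr, sub_self]

end NontriviallyNormedField

end PowerSeries

theorem gaussNorm_eq_gaussNorm_mk {𝕜 : Type*} [NormedField 𝕜] (a : ℕ → 𝕜) (ρ : ℝ) :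
    gaussNorm a ρ = PowerSeries.gaussNorm (‖·‖) ρ (mk a) := by
  simp [PowerSeries.gaussNorm_eq, _root_.gaussNorm]

theorem frequently_mem_nhdsNE_zero {𝕜 S : Type*} [NormedDivisionRing 𝕜] [SetLike S 𝕜]
    [SubmonoidClass S 𝕜] {K : S} {x : 𝕜} (hxK : x ∈ K) (hx0 : x ≠ 0) (hx1 : ‖x‖ < 1) :
    ∃ᶠ z in 𝓝[≠] 0, z ∈ K :=
  (tendsto_nhdsWithin_iff.mpr ⟨tendsto_pow_atTop_nhds_zero_of_norm_lt_one hx1,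
    .of_forall fun _ => pow_ne_zero _ hx0⟩).frequently
    (.of_forall fun n => pow_mem hxK n : ∃ᶠ n in atTop, x ^ n ∈ K)

theorem statement0_general
    -- `Cp` is a model of `ℂ_p`:
    (p : ℕ) [Fact p.Prime] (Cp : Type*) [NontriviallyNormedField Cp]
    [IsUltrametricDist Cp] [CompleteSpace Cp]
    (hpCp : ‖(p : Cp)‖ = (p : ℝ)⁻¹)
    -- `K` is a complete (i.e. closed) subfield `F` of `ℂ_p`:
    (K : Subfield Cp)
    -- the radii:
    (r s t : ℝ) (hs : 0 < s) (hst : s ≤ t) (htr : t ≤ r)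
    -- `f` is analytic on the closed ball of radius `r` in `F`, with
    -- coefficient sequence `a`:
    (a : ℕ → Cp)
    (ha : Tendsto (fun n => ‖a n‖ * r ^ n) atTop (nhds 0))
    -- `g` is analytic on the closed ball of radius `r` in `F`, with
    -- coefficient sequence `c`:
    (c : ℕ → Cp)
    (hc : Tendsto (fun n => ‖c n‖ * r ^ n) atTop (nhds 0))
    -- `f` has (at least) `k` zeros `b 0, …, b (k-1)` (with multiplicity) in the
    -- closed ball of radius `s` in `F`:
    (k : ℕ) (b : Fin k → Cp) (hbs : ∀ i, ‖b i‖ ≤ s)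
    -- i.e. `f(z) = (z - b 1)⋯(z - b k) * g(z)` on the closed ball of radius `r` in `F`:
    (hfactor : ∀ z ∈ K, ‖z‖ ≤ r →
      ∑' n, a n * z ^ n = (∏ i, (z - b i)) * ∑' n, c n * z ^ n) :
    -- conclusion: `|f|_s ≤ (s/t)^k * |f|_t`
    gaussNorm a s ≤ (s / t) ^ k * gaussNorm a t := by
  have hr : 0 < r := hs.trans_le (hst.trans htr)
  have hf : IsRestricted r (mk a) := (isRestricted_iff' r _).mpr (by simpa using ha)
  have hg : IsRestricted r (mk c) := (isRestricted_iff' r _).mpr (by simpa using hc)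
  have hp : (p : Cp) ≠ 0 ∧ ‖(p : Cp)‖ < 1 := by
    have hp1 : (1 : ℝ) < p := by exact_mod_cast (Fact.out : p.Prime).one_lt
    rw [← norm_pos_iff, hpCp]
    exact ⟨by positivity, inv_lt_one_of_one_lt₀ hp1⟩
  have hfactor' : mk a = (∏ i, (X - C (b i))) * mk c :=
    hf.eq_of_frequently_tsum_eq hr (isRestricted.mul r (isRestricted_prod_X_sub_C _ b r) hg)
      (frequently_mem_nhdsNE_zero (natCast_mem K p) hp.1 hp.2) fun z hzK hzr => by
        rw [tsum_coeff_prod_X_sub_C_mul_mul_pow hg hzr]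
        simpa using hfactor z hzK hzr
  rw [gaussNorm_eq_gaussNorm_mk, gaussNorm_eq_gaussNorm_mk, hfactor']
  simpa using gaussNorm_prod_X_sub_C_mul_le (s := .univ) hs hst (fun i _ => hbs i)
    (hg.mono (hs.le.trans hst) htr)

theorem statement0
    -- `Cp` is a model of `ℂ_p`:
    (p : ℕ) [Fact p.Prime] (Cp : Type*) [NontriviallyNormedField Cp]
    [IsUltrametricDist Cp] [CompleteSpace Cp] [IsAlgClosed Cp]
    (hpCp : ‖(p : Cp)‖ = (p : ℝ)⁻¹)
    -- `K` is a complete (i.e. closed) subfield `F` of `ℂ_p`: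
    (K : Subfield Cp) (hK : IsClosed (K : Set Cp))
    -- the radii:
    (r s t : ℝ) (hr : 0 < r) (hs : 0 < s) (hst : s ≤ t) (htr : t ≤ r)
    -- `f` is analytic on the closed ball of radius `r` in `F`, with
    -- coefficient sequence `a`:
    (a : ℕ → Cp) (haK : ∀ n, a n ∈ K)
    (ha : Tendsto (fun n => ‖a n‖ * r ^ n) atTop (nhds 0))
    -- `g` is analytic on the closed ball of radius `r` in `F`, with
    -- coefficient sequence `c`:
    (c : ℕ → Cp) (hcK : ∀ n, c n ∈ K)
    (hc : Tendsto (fun n => ‖c n‖ * r ^ n) atTop (nhds 0))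
    -- `f` has (at least) `k` zeros `b 0, …, b (k-1)` (with multiplicity) in the
    -- closed ball of radius `s` in `F`:
    (k : ℕ) (b : Fin k → Cp) (hbK : ∀ i, b i ∈ K) (hbs : ∀ i, ‖b i‖ ≤ s)
    -- i.e. `f(z) = (z - b 1)⋯(z - b k) * g(z)` on the closed ball of radius `r` in `F`:
    (hfactor : ∀ z ∈ K, ‖z‖ ≤ r →
      ∑' n, a n * z ^ n = (∏ i, (z - b i)) * ∑' n, c n * z ^ n) :
    -- conclusion: `|f|_s ≤ (s/t)^k * |f|_t`
    gaussNorm a s ≤ (s / t) ^ k * gaussNorm a t :=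
  statement0_general p Cp hpCp K r s t hs hst htr a ha c hc k b hbs hfactor
end

section
/- Let p be a prime, let r > 0, and let f be a function analytic on the closed ball {x ∈ ℂ_p : |x|_p ≤ r}. Let s, t be real numbers with 0 < s ≤ t ≤ r. Suppose f has exactly m zeros (counted with multiplicity) in the open ball B(t) = {x ∈ ℂ_p : |x|_p < t}, in the sense that f(z) = α·(z − b₁)⋯(z − b_m)·g(z) for some α ∈ ℂ_p, some b₁, …, b_m ∈ B(t), and some function g analytic on the closed ball {x : |x|_p ≤ r} having no zero in B(t). Then |f|_t ≤ (t/s)^m · |f|_s. -/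
/-!
STATEMENT 1 (Lemma 3.2 of the paper).

We model `ℂ_p` by an arbitrary algebraically closed, complete, nonarchimedean
normed field `Cp` whose norm satisfies `‖p‖ = p⁻¹` (of which `ℂ_p` is an
instance).

A function analytic on the closed ball of radius `r` is given by its
coefficient sequence `a : ℕ → Cp` satisfying `‖a n‖ * r ^ n → 0`; its value at
`z` is `∑' n, a n * z ^ n` and its Gauss norm at radius `r` is
`⨆ n, ‖a n‖ * r ^ n`.
-/

open Filter

/-!
The Gauss norm is multiplicative: in a Cauchy product the term formed by the largest indices
attaining the two Gauss norms strictly dominates all others. By uniqueness of power series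
expansions the coefficients of `f` are those of `Q * g` with `Q = α ∏ (X - bᵢ)`, and
`|X - b|_ρ = max ρ |b|`, so `|f|_ρ = |α| ∏ max ρ |bᵢ| · |g|_ρ`.

The heart of the matter is that `|g|_ρ = |g(0)|` for `ρ ≤ t`. Otherwise, for some `ρ < t`, the
largest index `K` attaining `|g|_ρ` is positive. Every long enough truncation of `g` then has the
same Gauss norm, at most `K` roots in the closed ball of radius `ρ`, and at least one there, so each
point `x` of the ball lies within `ρ (|P(x)| / |P|_ρ)^(1/K)` of such a root. Starting from a root
of one truncation, this produces roots of the next ones forming a Cauchy sequence, whose limit is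
a zero of `g` in `B(t)`.

Finally `max t |b| ≤ (t / s) max s |b|` for each factor.
-/

open Polynomial hiding gaussNorm
open Topology Finset.HasAntidiagonal

theorem IsUltrametricDist.cauchySeq_of_tendsto_dist_succ {X : Type*} [PseudoMetricSpace X]
    [IsUltrametricDist X] {y : ℕ → X} (h : Tendsto (fun n => dist (y n) (y (n + 1))) atTop (𝓝 0)) :
    CauchySeq y := by
  refine Metric.cauchySeq_iff'.mpr fun ε hε => ?_
  obtain ⟨N, hN⟩ := eventually_atTop.mp (h.eventually (gt_mem_nhds hε))
  refine ⟨N, fun n hn => ?_⟩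
  induction n, hn using Nat.le_induction with
  | base => simpa using hε
  | succ n hn ih =>
    exact (dist_triangle_max _ (y n) _).trans_lt (max_lt (by rw [dist_comm]; exact hN n hn) ih)

theorem exists_seq_of_forall_exists {X : Type*} {S : Set X} {R : ℕ → X → X → Prop} {x₀ : X}
    (hx₀ : x₀ ∈ S) (h : ∀ n, ∀ x ∈ S, ∃ y ∈ S, R n x y) :
    ∃ y : ℕ → X, y 0 = x₀ ∧ ∀ n, y n ∈ S ∧ R n (y n) (y (n + 1)) := by
  choose f hfS hfR using h
  let z : ℕ → S := fun n => Nat.rec ⟨x₀, hx₀⟩ (fun n x => ⟨f n x x.2, hfS n x x.2⟩) n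
  refine ⟨fun n => (z n).1, rfl, fun n => ⟨(z n).2, ?_⟩⟩
  exact hfR n (z n).1 (z n).2

theorem tendsto_zero_of_tendsto_pow {α : Type*} {l : Filter α} {f : α → ℝ} (hf : ∀ a, 0 ≤ f a)
    {K : ℕ} (hK : K ≠ 0) (h : Tendsto (fun a => f a ^ K) l (𝓝 0)) : Tendsto f l (𝓝 0) := by
  have := h.rpow_const (p := (K : ℝ)⁻¹) (Or.inr (by positivity))
  rw [Real.zero_rpow (by positivity)] at this
  exact this.congr fun a => Real.pow_rpow_inv_natCast (hf a) hK

section GaussNorm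

variable {Cp : Type*} [NormedField Cp] {u : ℕ → Cp} {ρ : ℝ}

theorem gaussNorm_nonneg (u : ℕ → Cp) (hρ : 0 ≤ ρ) : 0 ≤ gaussNorm u ρ :=
  Real.iSup_nonneg fun n => by positivity

theorem le_gaussNorm (hu : BddAbove (Set.range fun n => ‖u n‖ * ρ ^ n)) (n : ℕ) :
    ‖u n‖ * ρ ^ n ≤ gaussNorm u ρ :=
  le_ciSup hu n

theorem gaussNorm_le {C : ℝ} (hC : 0 ≤ C) (h : ∀ n, ‖u n‖ * ρ ^ n ≤ C) : gaussNorm u ρ ≤ C :=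
  Real.iSup_le h hC

@[simp]
theorem gaussNorm_zero (ρ : ℝ) : gaussNorm (0 : ℕ → Cp) ρ = 0 := by
  simp [gaussNorm]

theorem tendsto_norm_mul_pow_of_le {r : ℝ} (hu : Tendsto (fun n => ‖u n‖ * r ^ n) atTop (𝓝 0))
    (hρ : 0 ≤ ρ) (hρr : ρ ≤ r) : Tendsto (fun n => ‖u n‖ * ρ ^ n) atTop (𝓝 0) :=
  squeeze_zero (fun n => by positivity)
    (fun n => mul_le_mul_of_nonneg_left (pow_le_pow_left₀ hρ hρr n) (norm_nonneg _)) hu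

def IsDominantIndex (u : ℕ → Cp) (ρ : ℝ) (n : ℕ) : Prop :=
  ‖u n‖ * ρ ^ n = gaussNorm u ρ ∧ ∀ i, n < i → ‖u i‖ * ρ ^ i < gaussNorm u ρ

theorem IsDominantIndex.gaussNorm_pos {n : ℕ} (h : IsDominantIndex u ρ n) (hρ : 0 ≤ ρ) :
    0 < gaussNorm u ρ :=
  (by positivity : 0 ≤ ‖u (n + 1)‖ * ρ ^ (n + 1)).trans_lt (h.2 _ n.lt_succ_self)

theorem exists_isDominantIndex (hρ : 0 < ρ) (hu : Tendsto (fun n => ‖u n‖ * ρ ^ n) atTop (𝓝 0))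
    (hu0 : u ≠ 0) : ∃ n, IsDominantIndex u ρ n := by
  set f : ℕ → ℝ := fun n => ‖u n‖ * ρ ^ n
  obtain ⟨n₁, hn₁⟩ := Function.ne_iff.mp hu0
  have hpos : 0 < f n₁ := by simp only [f]; positivity
  obtain ⟨K, hK⟩ := eventually_atTop.mp (hu.eventually (gt_mem_nhds hpos))
  have hn₁K : n₁ < K := not_le.mp fun h => (hK n₁ h).false
  obtain ⟨i, -, hi⟩ := (Finset.range K).exists_max_image f ⟨n₁, Finset.mem_range.mpr hn₁K⟩
  have hle : ∀ n, f n ≤ f i := fun n => (lt_or_ge n K).elim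
    (fun h => hi n (Finset.mem_range.mpr h))
    (fun h => (hK n h).le.trans (hi n₁ (Finset.mem_range.mpr hn₁K)))
  have hmax : gaussNorm u ρ = f i :=
    le_antisymm (gaussNorm_le (by positivity) hle)
      (le_gaussNorm ⟨f i, Set.forall_mem_range.mpr hle⟩ i)
  have hbdd : BddAbove {n | f n = f i} := ⟨K, fun n hn => not_lt.mp fun h =>
    ((hK n h.le).trans_le (hi n₁ (Finset.mem_range.mpr hn₁K))).ne hn⟩
  refine ⟨sSup {n | f n = f i}, hmax ▸ Nat.sSup_mem (s := {n | f n = f i}) ⟨i, rfl⟩ hbdd,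
    fun j hj => ?_⟩
  exact hmax ▸ (hle j).lt_of_ne fun h => hj.not_ge (le_csSup hbdd h)

theorem summable_norm_mul_pow {r : ℝ} (hu : BddAbove (Set.range fun n => ‖u n‖ * r ^ n)) {z : Cp}
    (hz : ‖z‖ < r) : Summable fun n => ‖u n * z ^ n‖ := by
  obtain ⟨C, hC⟩ := hu
  have hr : 0 < r := (norm_nonneg z).trans_lt hz
  refine Summable.of_nonneg_of_le (fun n => norm_nonneg _) (fun n => ?_)
    ((summable_geometric_of_lt_one (by positivity) ((div_lt_one hr).mpr hz)).mul_left C)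
  calc ‖u n * z ^ n‖ = ‖u n‖ * r ^ n * (‖z‖ / r) ^ n := by
        rw [norm_mul, norm_pow, div_pow, mul_assoc, mul_div_cancel₀ _ (by positivity)]
    _ ≤ C * (‖z‖ / r) ^ n := by gcongr; exact hC ⟨n, rfl⟩

end GaussNorm

section CauchyProduct

variable {Cp : Type*} [NormedField Cp] {u v : ℕ → Cp} {ρ : ℝ}

def cauchyProduct (u v : ℕ → Cp) (n : ℕ) : Cp :=
  ∑ x ∈ antidiagonal n, u x.1 * v x.2

@[simp]
theorem cauchyProduct_zero_left (v : ℕ → Cp) : cauchyProduct 0 v = 0 :=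
  funext fun n => by simp [cauchyProduct]

@[simp]
theorem cauchyProduct_zero_right (u : ℕ → Cp) : cauchyProduct u 0 = 0 :=
  funext fun n => by simp [cauchyProduct]

variable [IsUltrametricDist Cp]

theorem norm_cauchyProduct_mul_pow_le (hρ : 0 < ρ)
    (hu : BddAbove (Set.range fun n => ‖u n‖ * ρ ^ n))
    (hv : BddAbove (Set.range fun n => ‖v n‖ * ρ ^ n)) (n : ℕ) :
    ‖cauchyProduct u v n‖ * ρ ^ n ≤ gaussNorm u ρ * gaussNorm v ρ := by
  have hG := mul_nonneg (gaussNorm_nonneg u hρ.le) (gaussNorm_nonneg v hρ.le)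
  rw [← le_div_iff₀ (by positivity)]
  refine IsUltrametricDist.norm_sum_le_of_forall_le_of_nonneg (by positivity) fun x hx => ?_
  rw [le_div_iff₀ (by positivity), norm_mul, ← mem_antidiagonal.mp hx, pow_add]
  calc ‖u x.1‖ * ‖v x.2‖ * (ρ ^ x.1 * ρ ^ x.2) = (‖u x.1‖ * ρ ^ x.1) * (‖v x.2‖ * ρ ^ x.2) := by
        ring
    _ ≤ gaussNorm u ρ * gaussNorm v ρ :=
        mul_le_mul (le_gaussNorm hu _) (le_gaussNorm hv _) (by positivity)
          (gaussNorm_nonneg u hρ.le)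

/-- Every other term of the sum defining `cauchyProduct u v (i + j)` has one factor beyond a
dominant index, hence is strictly smaller than `u i * v j`. -/
theorem norm_cauchyProduct_mul_pow_of_isDominantIndex (hρ : 0 < ρ)
    (hu : BddAbove (Set.range fun n => ‖u n‖ * ρ ^ n))
    (hv : BddAbove (Set.range fun n => ‖v n‖ * ρ ^ n)) {i j : ℕ}
    (hi : IsDominantIndex u ρ i) (hj : IsDominantIndex v ρ j) :
    ‖cauchyProduct u v (i + j)‖ * ρ ^ (i + j) = gaussNorm u ρ * gaussNorm v ρ := by
  have hupos := hi.gaussNorm_pos hρ.le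
  have hvpos := hj.gaussNorm_pos hρ.le
  have hterm : ∀ x ∈ antidiagonal (i + j),
      ‖u x.1 * v x.2‖ * ρ ^ (i + j) = (‖u x.1‖ * ρ ^ x.1) * (‖v x.2‖ * ρ ^ x.2) := by
    intro x hx
    rw [← mem_antidiagonal.mp hx, norm_mul, pow_add]
    ring
  rw [cauchyProduct, IsNonarchimedean.apply_sum_eq_of_lt IsUltrametricDist.isNonarchimedean_norm
    (fun _ => (norm_neg _).symm) (k := (i, j)) (mem_antidiagonal.mpr rfl), hterm _
    (mem_antidiagonal.mpr rfl), hi.1, hj.1]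
  intro x hx hne
  rw [← mul_lt_mul_iff_left₀ (pow_pos hρ (i + j)), hterm x hx, hterm _
    (mem_antidiagonal.mpr rfl), hi.1, hj.1]
  have hsum := mem_antidiagonal.mp hx
  rcases lt_or_ge i x.1 with h | h
  · exact mul_lt_mul_of_lt_of_le_of_nonneg_of_pos (hi.2 _ h) (le_gaussNorm hv _) (by positivity)
      hvpos
  · have : j < x.2 := by
      by_contra! h'
      exact hne (Prod.ext (by omega) (by omega))
    exact mul_lt_mul_of_le_of_lt_of_nonneg_of_pos (le_gaussNorm hu _) (hj.2 _ this) (by positivity)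
      hupos

theorem gaussNorm_cauchyProduct (hρ : 0 < ρ) (hu : Tendsto (fun n => ‖u n‖ * ρ ^ n) atTop (𝓝 0))
    (hv : Tendsto (fun n => ‖v n‖ * ρ ^ n) atTop (𝓝 0)) :
    gaussNorm (cauchyProduct u v) ρ = gaussNorm u ρ * gaussNorm v ρ := by
  rcases eq_or_ne u 0 with rfl | hu0
  · simp
  rcases eq_or_ne v 0 with rfl | hv0
  · simp
  obtain ⟨i, hi⟩ := exists_isDominantIndex hρ hu hu0
  obtain ⟨j, hj⟩ := exists_isDominantIndex hρ hv hv0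
  have hle := norm_cauchyProduct_mul_pow_le hρ hu.bddAbove_range hv.bddAbove_range
  refine le_antisymm (gaussNorm_le (mul_nonneg (gaussNorm_nonneg u hρ.le)
    (gaussNorm_nonneg v hρ.le)) hle) ?_
  rw [← norm_cauchyProduct_mul_pow_of_isDominantIndex hρ hu.bddAbove_range hv.bddAbove_range hi hj]
  exact le_gaussNorm ⟨_, Set.forall_mem_range.mpr hle⟩ _

end CauchyProduct

section PolynomialGaussNorm

variable {Cp : Type*} [NormedField Cp] {ρ : ℝ}

theorem tendsto_norm_coeff_mul_pow (P : Cp[X]) (ρ : ℝ) :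
    Tendsto (fun n => ‖P.coeff n‖ * ρ ^ n) atTop (𝓝 0) :=
  tendsto_const_nhds.congr' <| (eventually_gt_atTop P.natDegree).mono fun n hn => by
    simp [P.coeff_eq_zero_of_natDegree_lt hn]

theorem gaussNorm_coeff_C (γ : Cp) (ρ : ℝ) : gaussNorm (C γ).coeff ρ = ‖γ‖ := by
  refine le_antisymm (gaussNorm_le (norm_nonneg γ) fun n => ?_) ?_
  · rcases n with _ | n <;> simp [coeff_C]
  · simpa using le_gaussNorm (tendsto_norm_coeff_mul_pow (C γ) ρ).bddAbove_range 0

theorem gaussNorm_coeff_X_sub_C (β : Cp) (hρ : 0 ≤ ρ) :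
    gaussNorm (X - C β).coeff ρ = max ρ ‖β‖ := by
  have hbdd := (tendsto_norm_coeff_mul_pow (X - C β) ρ).bddAbove_range
  refine le_antisymm (gaussNorm_le (le_max_of_le_left hρ) fun n => ?_) ?_
  · rcases n with _ | _ | n <;> simp [coeff_X, coeff_C, hρ]
  · exact max_le (by simpa using le_gaussNorm hbdd 1) (by simpa using le_gaussNorm hbdd 0)

theorem coeff_mul_eq_cauchyProduct (P Q : Cp[X]) :
    (P * Q).coeff = cauchyProduct P.coeff Q.coeff :=
  funext (coeff_mul P Q)

variable [IsUltrametricDist Cp]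

@[simps]
noncomputable def gaussNormHom (hρ : 0 < ρ) : Cp[X] →* ℝ where
  toFun P := gaussNorm P.coeff ρ
  map_one' := by simpa using gaussNorm_coeff_C (1 : Cp) ρ
  map_mul' P Q := by
    change gaussNorm (P * Q).coeff ρ = _
    rw [coeff_mul_eq_cauchyProduct]
    exact gaussNorm_cauchyProduct hρ (tendsto_norm_coeff_mul_pow P ρ)
      (tendsto_norm_coeff_mul_pow Q ρ)

theorem gaussNorm_coeff_C_mul_prod_X_sub_C {ι : Type*} (s : Finset ι) (α : Cp) (b : ι → Cp)
    (hρ : 0 < ρ) :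
    gaussNorm (C α * ∏ i ∈ s, (X - C (b i))).coeff ρ = ‖α‖ * ∏ i ∈ s, max ρ ‖b i‖ := by
  rw [← gaussNormHom_apply hρ, map_mul, map_prod]
  simp [gaussNorm_coeff_C, gaussNorm_coeff_X_sub_C _ hρ.le]

end PolynomialGaussNorm

section RootsInClosedBall

variable {Cp : Type*} [NormedField Cp] {ρ : ℝ}

noncomputable def rootsInClosedBall (P : Cp[X]) (ρ : ℝ) : Multiset Cp :=
  P.roots.filter fun β => ‖β‖ ≤ ρ

theorem rootsInClosedBall_add_filter_not (P : Cp[X]) (ρ : ℝ) :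
    rootsInClosedBall P ρ + P.roots.filter (fun β => ¬‖β‖ ≤ ρ) = P.roots :=
  Multiset.filter_add_not _ _

variable [IsAlgClosed Cp]

theorem C_leadingCoeff_mul_prod_roots (P : Cp[X]) :
    C P.leadingCoeff * (P.roots.map fun β => X - C β).prod = P :=
  C_leadingCoeff_mul_prod_multiset_X_sub_C IsAlgClosed.card_roots_eq_natDegree

theorem norm_eval_eq_prod_roots (P : Cp[X]) (x : Cp) :
    ‖P.eval x‖ = ‖P.leadingCoeff‖ * (P.roots.map fun β => ‖x - β‖).prod := by
  conv_lhs => rw [← C_leadingCoeff_mul_prod_roots P]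
  rw [eval_mul, eval_C, eval_multiset_prod, norm_mul]
  congr 1
  refine (map_multiset_prod (normHom : Cp →*₀ ℝ) _).trans ?_
  simp [Multiset.map_map]

variable [IsUltrametricDist Cp]

theorem gaussNorm_coeff_eq_prod_roots (P : Cp[X]) (hρ : 0 < ρ) :
    gaussNorm P.coeff ρ = ‖P.leadingCoeff‖ * (P.roots.map fun β => max ρ ‖β‖).prod := by
  conv_lhs => rw [← C_leadingCoeff_mul_prod_roots P]
  rw [← gaussNormHom_apply hρ, map_mul, map_multiset_prod, Multiset.map_map]
  simp [gaussNorm_coeff_C, gaussNorm_coeff_X_sub_C _ hρ.le]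

/-- With `P = U * V` and `V` the monic factor over the roots in the ball, `deg V` is a dominant
index of `V`, so the coefficient of `P` at `i₀ + deg V` attains `|P|_ρ` for a dominant index
`i₀` of `U`. -/
theorem card_rootsInClosedBall_le {P : Cp[X]} (hρ : 0 < ρ) {K : ℕ}
    (hK : ∀ i, K < i → ‖P.coeff i‖ * ρ ^ i < gaussNorm P.coeff ρ) :
    (rootsInClosedBall P ρ).card ≤ K := by
  set near := rootsInClosedBall P ρ
  set far := P.roots.filter fun β => ¬‖β‖ ≤ ρ
  set V : Cp[X] := (near.map fun β => X - C β).prod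
  set U : Cp[X] := C P.leadingCoeff * (far.map fun β => X - C β).prod
  have hPUV : P = U * V := by
    conv_lhs => rw [← C_leadingCoeff_mul_prod_roots P, ← rootsInClosedBall_add_filter_not P ρ]
    rw [Multiset.map_add, Multiset.prod_add]
    ring
  have hVmonic : V.Monic := monic_multiset_prod_of_monic _ _ fun β _ => monic_X_sub_C β
  have hVdeg : V.natDegree = near.card := natDegree_multiset_prod_X_sub_C_eq_card near
  have hVnorm : gaussNorm V.coeff ρ = ρ ^ near.card := by
    rw [← gaussNormHom_apply hρ, map_multiset_prod, Multiset.map_map,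
      Multiset.map_congr rfl fun β hβ => ?_, Multiset.map_const', Multiset.prod_replicate]
    simpa [gaussNorm_coeff_X_sub_C _ hρ.le] using (Multiset.mem_filter.mp hβ).2
  have hV : IsDominantIndex V.coeff ρ near.card := by
    refine ⟨by rw [← hVdeg, hVmonic.coeff_natDegree, hVdeg, hVnorm, norm_one, one_mul],
      fun i hi => ?_⟩
    rw [coeff_eq_zero_of_natDegree_lt (hVdeg ▸ hi), hVnorm, norm_zero, zero_mul]
    positivity
  have hU : U.coeff ≠ 0 := by
    intro h
    have hP : P.coeff = 0 := by rw [hPUV, coeff_mul_eq_cauchyProduct, h, cauchyProduct_zero_left]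
    simpa [hP] using hK (K + 1) K.lt_succ_self
  obtain ⟨i₀, hi₀⟩ := exists_isDominantIndex hρ (tendsto_norm_coeff_mul_pow U ρ) hU
  have hattain := norm_cauchyProduct_mul_pow_of_isDominantIndex hρ
    (tendsto_norm_coeff_mul_pow U ρ).bddAbove_range
    (tendsto_norm_coeff_mul_pow V ρ).bddAbove_range hi₀ hV
  rw [← coeff_mul_eq_cauchyProduct, ← gaussNormHom_apply hρ, ← gaussNormHom_apply hρ, ← map_mul,
    gaussNormHom_apply, ← hPUV] at hattain
  by_contra! h
  exact (hK _ (by omega)).ne hattain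

theorem rootsInClosedBall_ne_zero {P : Cp[X]} (hρ : 0 < ρ)
    (h0 : ‖P.coeff 0‖ < gaussNorm P.coeff ρ) : rootsInClosedBall P ρ ≠ 0 := by
  intro h
  refine h0.ne ?_
  rw [coeff_zero_eq_eval_zero, norm_eval_eq_prod_roots, gaussNorm_coeff_eq_prod_roots P hρ]
  congr 2
  refine Multiset.map_congr rfl fun β hβ => ?_
  rw [zero_sub, norm_neg, max_eq_right (not_le.mp (Multiset.filter_eq_nil.mp h β hβ)).le]

theorem exists_isRoot_pow_mul_gaussNorm_le {P : Cp[X]} (hρ : 0 < ρ) {K : ℕ}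
    (h0 : ‖P.coeff 0‖ < gaussNorm P.coeff ρ)
    (hK : ∀ i, K < i → ‖P.coeff i‖ * ρ ^ i < gaussNorm P.coeff ρ) {x : Cp} (hx : ‖x‖ ≤ ρ) :
    ∃ y, ‖y‖ ≤ ρ ∧ P.IsRoot y ∧ (‖x - y‖ / ρ) ^ K * gaussNorm P.coeff ρ ≤ ‖P.eval x‖ := by
  set near := rootsInClosedBall P ρ
  set far := P.roots.filter fun β => ¬‖β‖ ≤ ρ
  have hfar : ∀ β ∈ far, ‖x - β‖ = max ρ ‖β‖ := fun β hβ => by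
    have hβ : ρ < ‖β‖ := not_le.mp (Multiset.mem_filter.mp hβ).2
    rw [sub_eq_add_neg, IsUltrametricDist.norm_add_eq_max_of_norm_ne_norm (by
      rw [norm_neg]; exact (hx.trans_lt hβ).ne), norm_neg, max_eq_right (hx.trans hβ.le),
      max_eq_right hβ.le]
  obtain ⟨y, hy, hmin⟩ :=
    Multiset.exists_min_image (fun β => ‖x - β‖) (rootsInClosedBall_ne_zero hρ h0)
  have hyρ : ‖y‖ ≤ ρ := (Multiset.mem_filter.mp hy).2
  refine ⟨y, hyρ, (mem_roots'.mp (Multiset.mem_of_mem_filter hy)).2, ?_⟩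
  have hxy : ‖x - y‖ ≤ ρ := by
    rw [sub_eq_add_neg]
    exact (IsUltrametricDist.norm_add_le_max _ _).trans (by rw [norm_neg]; exact max_le hx hyρ)
  set δ := ‖x - y‖ / ρ
  have hδ : δ * ρ = ‖x - y‖ := div_mul_cancel₀ _ hρ.ne'
  have hδ1 : δ ≤ 1 := div_le_one_of_le₀ hxy hρ.le
  calc δ ^ K * gaussNorm P.coeff ρ ≤ δ ^ near.card * gaussNorm P.coeff ρ :=
        mul_le_mul_of_nonneg_right (pow_le_pow_of_le_one (by positivity) hδ1
          (card_rootsInClosedBall_le hρ hK)) (gaussNorm_nonneg _ hρ.le)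
    _ = ‖P.leadingCoeff‖ * ((near.map fun β => δ * max ρ ‖β‖).prod *
        (far.map fun β => max ρ ‖β‖).prod) := by
        rw [gaussNorm_coeff_eq_prod_roots P hρ, Multiset.prod_map_mul, Multiset.map_const',
          Multiset.prod_replicate, ← rootsInClosedBall_add_filter_not P ρ, Multiset.map_add,
          Multiset.prod_add]
        ring
    _ ≤ ‖P.leadingCoeff‖ * ((near.map fun β => ‖x - β‖).prod *
        (far.map fun β => ‖x - β‖).prod) := by
        have hnear_le : (near.map fun β => δ * max ρ ‖β‖).prod ≤ (near.map fun β => ‖x - β‖).prod :=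
          Multiset.prod_map_le_prod_map₀ _ _ (fun β _ => by positivity) fun β hβ => by
            rw [max_eq_left (Multiset.mem_filter.mp hβ).2, hδ]
            exact hmin β hβ
        rw [Multiset.map_congr rfl hfar]
        gcongr
        exact Multiset.prod_map_nonneg fun β _ => by positivity
    _ = ‖P.eval x‖ := by
        rw [norm_eval_eq_prod_roots, ← rootsInClosedBall_add_filter_not P ρ, Multiset.map_add,
          Multiset.prod_add]

end RootsInClosedBall

section Lipschitz

variable {Cp : Type*} [NormedField Cp] [IsUltrametricDist Cp] {ρ : ℝ} {x y : Cp}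

theorem norm_pow_sub_pow_mul_le (hx : ‖x‖ ≤ ρ) (hy : ‖y‖ ≤ ρ) (n : ℕ) :
    ‖x ^ n - y ^ n‖ * ρ ≤ ‖x - y‖ * ρ ^ n := by
  have hρ : 0 ≤ ρ := (norm_nonneg x).trans hx
  induction n with
  | zero => simp
  | succ n ih =>
    rw [show x ^ (n + 1) - y ^ (n + 1) = x * (x ^ n - y ^ n) + (x - y) * y ^ n by ring]
    refine (mul_le_mul_of_nonneg_right (IsUltrametricDist.norm_add_le_max _ _) hρ).trans ?_
    rw [max_mul_of_nonneg _ _ hρ, norm_mul, norm_mul, norm_pow, pow_succ]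
    refine max_le ?_ ?_
    · calc ‖x‖ * ‖x ^ n - y ^ n‖ * ρ = ‖x‖ * (‖x ^ n - y ^ n‖ * ρ) := by ring
        _ ≤ ρ * (‖x - y‖ * ρ ^ n) := mul_le_mul hx ih (by positivity) hρ
        _ = ‖x - y‖ * (ρ ^ n * ρ) := by ring
    · rw [mul_assoc]
      gcongr

theorem norm_eval_sub_eval_mul_le (P : Cp[X]) (hρ : 0 < ρ) (hx : ‖x‖ ≤ ρ) (hy : ‖y‖ ≤ ρ) :
    ‖P.eval x - P.eval y‖ * ρ ≤ ‖x - y‖ * gaussNorm P.coeff ρ := by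
  have hG := gaussNorm_nonneg P.coeff hρ.le
  rw [eval_eq_sum_range, eval_eq_sum_range, ← Finset.sum_sub_distrib, ← le_div_iff₀ hρ]
  refine IsUltrametricDist.norm_sum_le_of_forall_le_of_nonneg (by positivity) fun n _ => ?_
  rw [← mul_sub, norm_mul, le_div_iff₀ hρ, mul_assoc]
  calc ‖P.coeff n‖ * (‖x ^ n - y ^ n‖ * ρ) ≤ ‖P.coeff n‖ * (‖x - y‖ * ρ ^ n) :=
        mul_le_mul_of_nonneg_left (norm_pow_sub_pow_mul_le hx hy n) (norm_nonneg _)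
    _ = ‖x - y‖ * (‖P.coeff n‖ * ρ ^ n) := by ring
    _ ≤ ‖x - y‖ * gaussNorm P.coeff ρ := mul_le_mul_of_nonneg_left
        (le_gaussNorm (tendsto_norm_coeff_mul_pow P ρ).bddAbove_range n) (norm_nonneg _)

end Lipschitz

section Truncation

open PowerSeries (trunc mk)

variable {Cp : Type*} [NormedField Cp] {c : ℕ → Cp} {ρ : ℝ}

theorem coeff_trunc_mk (c : ℕ → Cp) (n i : ℕ) :
    (trunc n (mk c)).coeff i = if i < n then c i else 0 := by
  simp [PowerSeries.coeff_trunc]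

theorem eval_trunc_mk (c : ℕ → Cp) (n : ℕ) (z : Cp) :
    (trunc n (mk c)).eval z = ∑ i ∈ Finset.range n, c i * z ^ i := by
  simp [eval, PowerSeries.eval₂_trunc_eq_sum_range]

theorem gaussNorm_trunc_mk_le (hc : BddAbove (Set.range fun n => ‖c n‖ * ρ ^ n)) (hρ : 0 ≤ ρ)
    (n : ℕ) : gaussNorm (trunc n (mk c)).coeff ρ ≤ gaussNorm c ρ := by
  refine gaussNorm_le (gaussNorm_nonneg c hρ) fun i => ?_
  rw [coeff_trunc_mk]
  split_ifs
  · exact le_gaussNorm hc i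
  · simpa using gaussNorm_nonneg c hρ

theorem gaussNorm_trunc_mk_of_isDominantIndex (hc : BddAbove (Set.range fun n => ‖c n‖ * ρ ^ n))
    (hρ : 0 ≤ ρ) {K n : ℕ} (hK : IsDominantIndex c ρ K) (hn : K < n) :
    gaussNorm (trunc n (mk c)).coeff ρ = gaussNorm c ρ := by
  refine le_antisymm (gaussNorm_trunc_mk_le hc hρ n) ?_
  have := le_gaussNorm (tendsto_norm_coeff_mul_pow (trunc n (mk c)) ρ).bddAbove_range K
  rwa [coeff_trunc_mk, if_pos hn, hK.1] at this

variable [IsUltrametricDist Cp] [CompleteSpace Cp]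

theorem tsum_eq_zero_of_tendsto_isRoot_trunc (hρ : 0 < ρ)
    (hc : Tendsto (fun n => ‖c n‖ * ρ ^ n) atTop (𝓝 0)) {N : ℕ → ℕ} (hN : Tendsto N atTop atTop)
    {y : ℕ → Cp} {z : Cp} (hy : Tendsto y atTop (𝓝 z)) (hyρ : ∀ j, ‖y j‖ ≤ ρ)
    (hroot : ∀ j, (trunc (N j) (mk c)).IsRoot (y j)) : ∑' n, c n * z ^ n = 0 := by
  have hz : ‖z‖ ≤ ρ := le_of_tendsto' hy.norm hyρ
  have hsum : Summable fun n => c n * z ^ n := by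
    refine NonarchimedeanAddGroup.summable_of_tendsto_cofinite_zero ?_
    rw [Nat.cofinite_eq_atTop]
    refine squeeze_zero_norm (fun n => ?_) hc
    rw [norm_mul, norm_pow]
    gcongr
  have hpartial : Tendsto (fun j => (trunc (N j) (mk c)).eval z) atTop
      (𝓝 (∑' n, c n * z ^ n)) := by
    simpa only [eval_trunc_mk, Function.comp_def] using hsum.hasSum.tendsto_sum_nat.comp hN
  have hlim : Tendsto (fun j => ‖y j - z‖ * (gaussNorm c ρ / ρ)) atTop (𝓝 0) := by
    simpa using (tendsto_iff_norm_sub_tendsto_zero.mp hy).mul_const (gaussNorm c ρ / ρ)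
  refine tendsto_nhds_unique hpartial (squeeze_zero_norm (fun j => ?_) hlim)
  calc ‖(trunc (N j) (mk c)).eval z‖
        = ‖(trunc (N j) (mk c)).eval z - (trunc (N j) (mk c)).eval (y j)‖ := by
        rw [(hroot j).eq_zero, sub_zero]
    _ ≤ ‖z - y j‖ * gaussNorm (trunc (N j) (mk c)).coeff ρ / ρ := by
        rw [le_div_iff₀ hρ]
        exact norm_eval_sub_eval_mul_le _ hρ hz (hyρ j)
    _ ≤ ‖y j - z‖ * (gaussNorm c ρ / ρ) := by
        rw [norm_sub_rev, mul_div_assoc]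
        gcongr
        exact gaussNorm_trunc_mk_le hc.bddAbove_range hρ.le _

end Truncation

section ZeroOfAnalyticFunction

open PowerSeries (trunc mk)

variable {Cp : Type*} [NormedField Cp] [IsUltrametricDist Cp] [IsAlgClosed Cp] {c : ℕ → Cp}
  {ρ : ℝ}

/-- The exponent `K` is uniform in `j` because it bounds the number of roots of every truncation
in the closed ball. -/
theorem exists_seq_isRoot_trunc_mk (hρ : 0 < ρ) (hc : Tendsto (fun n => ‖c n‖ * ρ ^ n) atTop (𝓝 0))
    {K : ℕ} (hK : IsDominantIndex c ρ K) (h0 : ‖c 0‖ < gaussNorm c ρ) :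
    ∃ y : ℕ → Cp, ∀ j, ‖y j‖ ≤ ρ ∧ (trunc (K + 1 + j) (mk c)).IsRoot (y j) ∧
      (‖y j - y (j + 1)‖ / ρ) ^ K * gaussNorm c ρ ≤ ‖c (K + 1 + j)‖ * ρ ^ (K + 1 + j) := by
  set P : ℕ → Cp[X] := fun j => trunc (K + 1 + j) (mk c)
  have hstep : ∀ j, ∀ x ∈ Metric.closedBall (0 : Cp) ρ, ∃ y ∈ Metric.closedBall (0 : Cp) ρ,
      (P j).IsRoot y ∧ (‖x - y‖ / ρ) ^ K * gaussNorm c ρ ≤ ‖(P j).eval x‖ := by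
    intro j x hx
    have hPG : gaussNorm (P j).coeff ρ = gaussNorm c ρ :=
      gaussNorm_trunc_mk_of_isDominantIndex hc.bddAbove_range hρ.le hK (by omega)
    simp only [mem_closedBall_zero_iff] at hx ⊢
    rw [← hPG]
    refine exists_isRoot_pow_mul_gaussNorm_le hρ ?_ (fun i hi => ?_) hx
    · rwa [hPG, coeff_trunc_mk, if_pos (by omega)]
    · rw [hPG, coeff_trunc_mk]
      split_ifs
      · exact hK.2 i hi
      · simpa using hK.gaussNorm_pos hρ.le
  obtain ⟨x₀, hx₀, hroot₀, -⟩ := hstep 0 0 (by simp [hρ.le])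
  obtain ⟨y, hy0, hy⟩ := exists_seq_of_forall_exists hx₀ fun j => hstep (j + 1)
  have hroot : ∀ j, (P j).IsRoot (y j) := by
    rintro (_ | j)
    · exact hy0 ▸ hroot₀
    · exact (hy j).2.1
  refine ⟨y, fun j => ⟨mem_closedBall_zero_iff.mp (hy j).1, hroot j, (hy j).2.2.trans ?_⟩⟩
  have hy_le := mem_closedBall_zero_iff.mp (hy j).1
  simp only [P, show K + 1 + (j + 1) = K + 1 + j + 1 by omega, PowerSeries.trunc_succ, eval_add,
    (hroot j).eq_zero, eval_monomial, PowerSeries.coeff_mk, zero_add, norm_mul, norm_pow]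
  gcongr

variable [CompleteSpace Cp]

theorem exists_tsum_eq_zero_of_norm_lt_gaussNorm (hρ : 0 < ρ)
    (hc : Tendsto (fun n => ‖c n‖ * ρ ^ n) atTop (𝓝 0)) (h0 : ‖c 0‖ < gaussNorm c ρ) :
    ∃ z, ‖z‖ ≤ ρ ∧ ∑' n, c n * z ^ n = 0 := by
  have hc0 : c ≠ 0 := by
    rintro rfl
    simp at h0
  obtain ⟨K, hK⟩ := exists_isDominantIndex hρ hc hc0
  have hK0 : K ≠ 0 := by
    rintro rfl
    exact h0.ne (by simpa using hK.1)
  have hG := hK.gaussNorm_pos hρ.le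
  obtain ⟨y, hy⟩ := exists_seq_isRoot_trunc_mk hρ hc hK h0
  have hN : Tendsto (fun j => K + 1 + j) atTop atTop :=
    tendsto_atTop_mono (fun j => Nat.le_add_left j (K + 1)) tendsto_id
  have hdist : Tendsto (fun j => dist (y j) (y (j + 1))) atTop (𝓝 0) := by
    have hshift : Tendsto (fun j => ‖c (K + 1 + j)‖ * ρ ^ (K + 1 + j) / gaussNorm c ρ) atTop
        (𝓝 0) := by
      simpa using (hc.comp hN).div_const (gaussNorm c ρ)
    have hpow := squeeze_zero (fun j => by positivity)
      (fun j => (le_div_iff₀ hG).mpr (hy j).2.2) hshift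
    simpa [dist_eq_norm, div_mul_cancel₀ _ hρ.ne'] using
      (tendsto_zero_of_tendsto_pow (fun j => by positivity) hK0 hpow).mul_const ρ
  obtain ⟨z, hz⟩ := cauchySeq_tendsto_of_complete
    (IsUltrametricDist.cauchySeq_of_tendsto_dist_succ hdist)
  exact ⟨z, le_of_tendsto' hz.norm fun j => (hy j).1, tsum_eq_zero_of_tendsto_isRoot_trunc hρ hc
    hN hz (fun j => (hy j).1) fun j => (hy j).2.1⟩

end ZeroOfAnalyticFunction

section ZeroFree

variable {Cp : Type*} [NormedField Cp] [IsUltrametricDist Cp] [IsAlgClosed Cp] [CompleteSpace Cp]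
  {c : ℕ → Cp} {r t : ℝ}

theorem norm_coeff_mul_pow_le_norm_coeff_zero (ht : 0 < t) (htr : t ≤ r)
    (hc : Tendsto (fun n => ‖c n‖ * r ^ n) atTop (𝓝 0))
    (hg : ∀ z : Cp, ‖z‖ < t → ∑' n, c n * z ^ n ≠ 0) (n : ℕ) : ‖c n‖ * t ^ n ≤ ‖c 0‖ := by
  have hbelow : ∀ ρ ∈ Set.Ioo 0 t, ‖c n‖ * ρ ^ n ≤ ‖c 0‖ := by
    rintro ρ ⟨hρ, hρt⟩
    have hcρ := tendsto_norm_mul_pow_of_le hc hρ.le (hρt.le.trans htr)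
    refine (le_gaussNorm hcρ.bddAbove_range n).trans (not_lt.mp fun h => ?_)
    obtain ⟨z, hz, hz0⟩ := exists_tsum_eq_zero_of_norm_lt_gaussNorm hρ hcρ h
    exact hg z (hz.trans_lt hρt) hz0
  have hcont : Tendsto (fun ρ : ℝ => ‖c n‖ * ρ ^ n) (𝓝[<] t) (𝓝 (‖c n‖ * t ^ n)) :=
    ((continuous_const.mul (continuous_pow n)).tendsto t).mono_left nhdsWithin_le_nhds
  exact le_of_tendsto hcont (eventually_of_mem (Ioo_mem_nhdsLT ht) hbelow)

theorem gaussNorm_eq_norm_coeff_zero (ht : 0 < t) (htr : t ≤ r)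
    (hc : Tendsto (fun n => ‖c n‖ * r ^ n) atTop (𝓝 0))
    (hg : ∀ z : Cp, ‖z‖ < t → ∑' n, c n * z ^ n ≠ 0) {ρ : ℝ} (hρ : 0 ≤ ρ) (hρt : ρ ≤ t) :
    gaussNorm c ρ = ‖c 0‖ := by
  refine le_antisymm (gaussNorm_le (norm_nonneg _) fun n => ?_) ?_
  · exact (mul_le_mul_of_nonneg_left (pow_le_pow_left₀ hρ hρt n) (norm_nonneg _)).trans
      (norm_coeff_mul_pow_le_norm_coeff_zero ht htr hc hg n)
  · simpa using le_gaussNorm (tendsto_norm_mul_pow_of_le hc hρ (hρt.trans htr)).bddAbove_range 0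

end ZeroFree

section IdentityTheorem

open FormalMultilinearSeries

variable {Cp : Type*} [NontriviallyNormedField Cp] [CompleteSpace Cp] {u v : ℕ → Cp} {r : ℝ}

theorem eq_zero_of_tsum_mul_pow_eq_zero (hr : 0 < r)
    (hu : BddAbove (Set.range fun n => ‖u n‖ * r ^ n))
    (h : ∀ z : Cp, ‖z‖ < r → ∑' n, u n * z ^ n = 0) : u = 0 := by
  set p := ofScalars Cp u
  obtain ⟨C, hC⟩ := hu
  have hrad : ENNReal.ofReal r ≤ p.radius := p.le_radius_of_bound C fun n => by
    rw [ofScalars_norm, Real.coe_toNNReal r hr.le]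
    exact hC ⟨n, rfl⟩
  have hp := (p.hasFPowerSeriesOnBall ((ENNReal.ofReal_pos.mpr hr).trans_le hrad)).hasFPowerSeriesAt
  refine (ofScalars_series_eq_zero Cp).mp (hp.eq_zero_of_eventually ?_)
  filter_upwards [Metric.ball_mem_nhds (0 : Cp) hr] with z hz
  simpa [p, FormalMultilinearSeries.sum, ofScalars_apply_eq, mul_comm] using
    h z (mem_ball_zero_iff.mp hz)

theorem tsum_cauchyProduct_coeff_mul_pow (Q : Cp[X]) {z : Cp}
    (hv : Summable fun n => ‖v n * z ^ n‖) :
    ∑' n, cauchyProduct Q.coeff v n * z ^ n = Q.eval z * ∑' n, v n * z ^ n := by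
  have hQ : ∀ n ∉ Finset.range (Q.natDegree + 1), Q.coeff n * z ^ n = 0 := fun n hn => by
    rw [coeff_eq_zero_of_natDegree_lt (by simpa [Nat.lt_succ_iff] using hn), zero_mul]
  rw [eval_eq_sum_range, ← tsum_eq_sum (L := SummationFilter.unconditional ℕ) hQ,
    tsum_mul_tsum_eq_tsum_sum_antidiagonal_of_summable_norm
      (summable_of_ne_finset_zero (s := Finset.range (Q.natDegree + 1)) fun n hn => by
        simp [hQ n hn]) hv]
  refine tsum_congr fun n => ?_
  rw [cauchyProduct, Finset.sum_mul]
  refine Finset.sum_congr rfl fun x hx => ?_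
  rw [← mem_antidiagonal.mp hx, pow_add]
  ring

variable [IsUltrametricDist Cp]

theorem eq_cauchyProduct_of_tsum_eq (hr : 0 < r) (hu : BddAbove (Set.range fun n => ‖u n‖ * r ^ n))
    (hv : BddAbove (Set.range fun n => ‖v n‖ * r ^ n)) (Q : Cp[X])
    (h : ∀ z : Cp, ‖z‖ < r → ∑' n, u n * z ^ n = Q.eval z * ∑' n, v n * z ^ n) :
    u = cauchyProduct Q.coeff v := by
  obtain ⟨A, hA⟩ := hu
  have hB := norm_cauchyProduct_mul_pow_le hr (tendsto_norm_coeff_mul_pow Q r).bddAbove_range hv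
  refine sub_eq_zero.mp (eq_zero_of_tsum_mul_pow_eq_zero hr
    ⟨A + gaussNorm Q.coeff r * gaussNorm v r, Set.forall_mem_range.mpr fun n => ?_⟩
    fun z hz => ?_)
  · rw [Pi.sub_apply]
    calc ‖u n - cauchyProduct Q.coeff v n‖ * r ^ n
        ≤ ‖u n‖ * r ^ n + ‖cauchyProduct Q.coeff v n‖ * r ^ n := by
          rw [← add_mul]
          gcongr
          exact norm_sub_le _ _
      _ ≤ _ := add_le_add (hA ⟨n, rfl⟩) (hB n)
  · simp only [Pi.sub_apply, sub_mul]
    rw [Summable.tsum_sub (summable_norm_mul_pow ⟨A, hA⟩ hz).of_norm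
      (summable_norm_mul_pow ⟨_, Set.forall_mem_range.mpr hB⟩ hz).of_norm, h z hz,
      tsum_cauchyProduct_coeff_mul_pow Q (summable_norm_mul_pow hv hz), sub_self]

end IdentityTheorem

theorem max_le_div_mul_max {s t x : ℝ} (hs : 0 < s) (hst : s ≤ t) (hx : 0 ≤ x) :
    max t x ≤ t / s * max s x := by
  rw [mul_max_of_nonneg _ _ (div_nonneg (hs.le.trans hst) hs.le), div_mul_cancel₀ _ hs.ne']
  exact max_le_max le_rfl (le_mul_of_one_le_left hx ((one_le_div hs).mpr hst))

theorem statement1_general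
    -- `Cp` is a model of `ℂ_p`:
    (Cp : Type*) [NontriviallyNormedField Cp]
    [IsUltrametricDist Cp] [CompleteSpace Cp] [IsAlgClosed Cp]
    -- the radii:
    (r s t : ℝ) (hs : 0 < s) (hst : s ≤ t) (htr : t ≤ r)
    -- `f` is analytic on the closed ball of radius `r`, with coefficient
    -- sequence `a`:
    (a : ℕ → Cp) (ha : Tendsto (fun n => ‖a n‖ * r ^ n) atTop (nhds 0))
    -- `g` is analytic on the closed ball of radius `r`, with coefficient
    -- sequence `c`:
    (c : ℕ → Cp) (hc : Tendsto (fun n => ‖c n‖ * r ^ n) atTop (nhds 0))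
    -- `f` has exactly `m` zeros `b 0, …, b (m-1)` (with multiplicity) in the
    -- open ball `B(t)`, in the sense that
    -- `f(z) = α * (z - b 1)⋯(z - b m) * g(z)` with all `b i ∈ B(t)` and `g`
    -- having no zero in `B(t)`:
    (m : ℕ) (α : Cp) (b : Fin m → Cp)
    (hg : ∀ z : Cp, ‖z‖ < t → (∑' n, c n * z ^ n) ≠ 0)
    (hfactor : ∀ z : Cp, ‖z‖ ≤ r →
      ∑' n, a n * z ^ n = α * (∏ i, (z - b i)) * ∑' n, c n * z ^ n) :
    -- conclusion: `|f|_t ≤ (t/s)^m * |f|_s`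
    gaussNorm a t ≤ (t / s) ^ m * gaussNorm a s := by
  have ht : 0 < t := hs.trans_le hst
  set Q : Cp[X] := C α * ∏ i, (X - C (b i))
  have haQ : a = cauchyProduct Q.coeff c :=
    eq_cauchyProduct_of_tsum_eq (ht.trans_le htr) ha.bddAbove_range hc.bddAbove_range Q
      fun z hz => by simp [Q, eval_prod, hfactor z hz.le]
  have hnorm : ∀ ρ, 0 < ρ → ρ ≤ t → gaussNorm a ρ = ‖α‖ * (∏ i, max ρ ‖b i‖) * ‖c 0‖ := by
    intro ρ hρ hρt
    rw [haQ, gaussNorm_cauchyProduct hρ (tendsto_norm_coeff_mul_pow Q ρ)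
      (tendsto_norm_mul_pow_of_le hc hρ.le (hρt.trans htr)), gaussNorm_coeff_C_mul_prod_X_sub_C _ _
      _ hρ, gaussNorm_eq_norm_coeff_zero ht htr hc hg hρ.le hρt]
  have hprod : ∏ i, max t ‖b i‖ ≤ (t / s) ^ m * ∏ i, max s ‖b i‖ := by
    calc ∏ i, max t ‖b i‖ ≤ ∏ i, (t / s * max s ‖b i‖) :=
          Finset.prod_le_prod (fun i _ => by positivity) fun i _ =>
            max_le_div_mul_max hs hst (norm_nonneg _)
      _ = (t / s) ^ m * ∏ i, max s ‖b i‖ := by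
        rw [Finset.prod_mul_distrib, Finset.prod_const, Finset.card_univ, Fintype.card_fin]
  rw [hnorm t ht le_rfl, hnorm s hs hst]
  calc ‖α‖ * (∏ i, max t ‖b i‖) * ‖c 0‖ ≤ ‖α‖ * ((t / s) ^ m * ∏ i, max s ‖b i‖) * ‖c 0‖ := by
        gcongr
    _ = (t / s) ^ m * (‖α‖ * (∏ i, max s ‖b i‖) * ‖c 0‖) := by ring

theorem statement1
    -- `Cp` is a model of `ℂ_p`:
    (p : ℕ) [Fact p.Prime] (Cp : Type*) [NontriviallyNormedField Cp]
    [IsUltrametricDist Cp] [CompleteSpace Cp] [IsAlgClosed Cp]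
    (hpCp : ‖(p : Cp)‖ = (p : ℝ)⁻¹)
    -- the radii:
    (r s t : ℝ) (hr : 0 < r) (hs : 0 < s) (hst : s ≤ t) (htr : t ≤ r)
    -- `f` is analytic on the closed ball of radius `r`, with coefficient
    -- sequence `a`:
    (a : ℕ → Cp) (ha : Tendsto (fun n => ‖a n‖ * r ^ n) atTop (nhds 0))
    -- `g` is analytic on the closed ball of radius `r`, with coefficient
    -- sequence `c`:
    (c : ℕ → Cp) (hc : Tendsto (fun n => ‖c n‖ * r ^ n) atTop (nhds 0))
    -- `f` has exactly `m` zeros `b 0, …, b (m-1)` (with multiplicity) in the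
    -- open ball `B(t)`, in the sense that
    -- `f(z) = α * (z - b 1)⋯(z - b m) * g(z)` with all `b i ∈ B(t)` and `g`
    -- having no zero in `B(t)`:
    (m : ℕ) (α : Cp) (b : Fin m → Cp) (hb : ∀ i, ‖b i‖ < t)
    (hg : ∀ z : Cp, ‖z‖ < t → (∑' n, c n * z ^ n) ≠ 0)
    (hfactor : ∀ z : Cp, ‖z‖ ≤ r →
      ∑' n, a n * z ^ n = α * (∏ i, (z - b i)) * ∑' n, c n * z ^ n) :
    -- conclusion: `|f|_t ≤ (t/s)^m * |f|_s`
    gaussNorm a t ≤ (t / s) ^ m * gaussNorm a s :=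
  statement1_general Cp r s t hs hst htr a ha c hc m α b hg hfactor
end

section
/- Let p be a prime, δ > 0, and let f(z) = ∑_{n≥0} a_n zⁿ be a nonzero function analytic on the closed ball {x ∈ ℂ_p : |x|_p ≤ δ}. Let k be a positive integer and suppose that f has at most k − 1 zeros (counted with multiplicity) in the open ball B(δ) = {x ∈ ℂ_p : |x|_p < δ}, in the sense that f(z) = α·(z − b₁)⋯(z − b_m)·g(z) with m ≤ k − 1, α ∈ ℂ_p, b₁, …, b_m ∈ B(δ), and g analytic on the closed ball {x : |x|_p ≤ δ} with no zero in B(δ). Then the Gauss norm of f at δ is attained among the first k coefficients: |f|_δ = max_{0 ≤ n ≤ k−1} |a_n|_p · δⁿ, equivalently |f|_δ = max_{0 ≤ n ≤ k−1} |f^{(n)}(0)/n!|_p · δⁿ. -/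
/-!
STATEMENT 3.

We model `ℂ_p` by an arbitrary algebraically closed, complete, nonarchimedean
normed field `Cp` whose norm satisfies `‖p‖ = p⁻¹` (of which `ℂ_p` is an
instance).

A function analytic on the closed ball of radius `δ` is given by its
coefficient sequence `a : ℕ → Cp` satisfying `‖a n‖ * δ ^ n → 0`; its value at
`z` is `∑' n, a n * z ^ n`, its Gauss norm at radius `δ` is
`⨆ n, ‖a n‖ * δ ^ n`, and `f⁽ⁿ⁾(0)/n! = a n`.
-/

open Filter

/-!
Write `f = P · g` with `P = α (z - b₁) ⋯ (z - bₘ)`. Call `i` a central index of a coefficient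
sequence at radius `r` if `‖aᵢ‖ rⁱ` is the maximum of the `‖aₙ‖ rⁿ` and strictly exceeds all earlier
terms. Over an ultrametric field central indices add under the Cauchy product, because the term
`uᵢ vⱼ` strictly dominates every other term of the `(i + j)`-th coefficient. Splitting `P` into
linear factors shows that its central index at `δ` is the number `m` of its roots in `B(δ)`.
The central index of `g` at `δ` is `0`: otherwise it stays positive at a slightly smaller radius
`r`, so every long partial sum of `g` has roots in `B(r)`, and roots of successive partial sums
can be chosen to form a Cauchy sequence, whose limit is a zero of `g` in `B(δ)`. Hence `f` has
central index `m ≤ k - 1` at `δ`, and its Gauss norm is attained there.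
-/

section

open Finset Topology IsUltrametricDist FormalMultilinearSeries

lemma IsUltrametricDist.norm_sum_lt_of_forall_lt {ι M : Type*} [SeminormedAddCommGroup M]
    [IsUltrametricDist M] {s : Finset ι} {f : ι → M} {C : ℝ} (hC : 0 < C)
    (h : ∀ i ∈ s, ‖f i‖ < C) : ‖∑ i ∈ s, f i‖ < C := by
  rcases s.eq_empty_or_nonempty with rfl | hs
  · simpa using hC
  obtain ⟨i, hi, hle⟩ := exists_norm_finsetSum_le_of_nonempty hs f
  exact hle.trans_lt (h i hi)

variable {K : Type*} [NontriviallyNormedField K]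

section PowerSeriesOnBall

variable {a b : ℕ → K} {δ M : ℝ}

lemma ofScalars_sum_eq_tsum_mul_pow (a : ℕ → K) :
    (ofScalars K a).sum = fun z => ∑' n, a n * z ^ n :=
  funext fun z => by simpa [ofScalarsSum] using ofScalars_sum_eq (E := K) a z

lemma mem_eball_radius_ofScalars (ha : ∀ n, ‖a n‖ * δ ^ n ≤ M) {z : K} (hz : ‖z‖ < δ) :
    z ∈ Metric.eball 0 (ofScalars K a).radius := by
  have hδ : 0 ≤ δ := (norm_nonneg z).trans hz.le
  have hr : (δ.toNNReal : ENNReal) ≤ (ofScalars K a).radius :=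
    (ofScalars K a).le_radius_of_bound M fun n => by
      simpa [ofScalars_norm, Real.coe_toNNReal _ hδ] using ha n
  refine lt_of_lt_of_le ?_ hr
  simpa [edist_zero_right, ← NNReal.coe_lt_coe, Real.coe_toNNReal _ hδ] using hz

lemma summable_norm_mul_pow_s3 (ha : ∀ n, ‖a n‖ * δ ^ n ≤ M) {z : K} (hz : ‖z‖ < δ) :
    Summable fun n => ‖a n * z ^ n‖ := by
  simpa [ofScalars_apply_eq, mul_comm] using
    (ofScalars K a).summable_norm_apply (mem_eball_radius_ofScalars ha hz)

variable [CompleteSpace K]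

lemma summable_mul_pow (ha : ∀ n, ‖a n‖ * δ ^ n ≤ M) {z : K} (hz : ‖z‖ < δ) :
    Summable fun n => a n * z ^ n :=
  (summable_norm_mul_pow_s3 ha hz).of_norm

lemma continuousOn_tsum_mul_pow (ha : ∀ n, ‖a n‖ * δ ^ n ≤ M) :
    ContinuousOn (fun z : K => ∑' n, a n * z ^ n) (Metric.ball 0 δ) := by
  rw [← ofScalars_sum_eq_tsum_mul_pow]
  exact (ofScalars K a).continuousOn.mono fun z hz =>
    mem_eball_radius_ofScalars ha (mem_ball_zero_iff.mp hz)

lemma hasFPowerSeriesAt_tsum_mul_pow (hδ : 0 < δ) (ha : ∀ n, ‖a n‖ * δ ^ n ≤ M) :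
    HasFPowerSeriesAt (fun z : K => ∑' n, a n * z ^ n) (ofScalars K a) 0 := by
  have hpos : 0 < (ofScalars K a).radius :=
    pos_of_gt (mem_eball_radius_ofScalars ha (z := 0) (by simpa using hδ))
  rw [← ofScalars_sum_eq_tsum_mul_pow]
  exact ((ofScalars K a).hasFPowerSeriesOnBall hpos).hasFPowerSeriesAt

theorem eq_of_tsum_mul_pow_eq {M' : ℝ} (hδ : 0 < δ) (ha : ∀ n, ‖a n‖ * δ ^ n ≤ M)
    (hb : ∀ n, ‖b n‖ * δ ^ n ≤ M')
    (h : ∀ z : K, ‖z‖ < δ → ∑' n, a n * z ^ n = ∑' n, b n * z ^ n) : a = b := by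
  have hab : (fun z : K => ∑' n, a n * z ^ n) =ᶠ[𝓝 0] fun z => ∑' n, b n * z ^ n :=
    eventually_of_mem (Metric.ball_mem_nhds 0 hδ) fun z hz => h z (mem_ball_zero_iff.mp hz)
  exact ofScalars_series_injective K K <|
    ((hasFPowerSeriesAt_tsum_mul_pow hδ ha).congr hab).eq_formalMultilinearSeries
      (hasFPowerSeriesAt_tsum_mul_pow hδ hb)

lemma tsum_mul_pow_mul_tsum_mul_pow {M' : ℝ} (ha : ∀ n, ‖a n‖ * δ ^ n ≤ M)
    (hb : ∀ n, ‖b n‖ * δ ^ n ≤ M') {z : K} (hz : ‖z‖ < δ) :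
    (∑' n, a n * z ^ n) * (∑' n, b n * z ^ n) =
      ∑' n, (∑ x ∈ antidiagonal n, a x.1 * b x.2) * z ^ n := by
  rw [tsum_mul_tsum_eq_tsum_sum_antidiagonal_of_summable_norm (summable_norm_mul_pow_s3 ha hz)
    (summable_norm_mul_pow_s3 hb hz)]
  refine tsum_congr fun n => ?_
  rw [Finset.sum_mul]
  refine Finset.sum_congr rfl fun x hx => ?_
  rw [← mem_antidiagonal.mp hx, pow_add]
  ring

end PowerSeriesOnBall

section CentralIndex

def IsCentralIndex (a : ℕ → K) (r : ℝ) (i : ℕ) : Prop :=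
  (∀ n, ‖a n‖ * r ^ n ≤ ‖a i‖ * r ^ i) ∧ ∀ n < i, ‖a n‖ * r ^ n < ‖a i‖ * r ^ i

variable {a u v w : ℕ → K} {r : ℝ} {i j : ℕ}

lemma IsCentralIndex.unique (hi : IsCentralIndex a r i) (hj : IsCentralIndex a r j) : i = j := by
  by_contra h
  rcases lt_or_gt_of_ne h with h | h
  · exact (hj.2 i h).not_ge (hi.1 j)
  · exact (hi.2 j h).not_ge (hj.1 i)

lemma IsCentralIndex.ne_zero (hi : IsCentralIndex a r i) (hi0 : 0 < i) : a i ≠ 0 := by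
  intro h
  have := hi.2 0 hi0
  rw [h, norm_zero, zero_mul] at this
  exact this.not_ge (by simp)

lemma exists_isCentralIndex (ha : Tendsto (fun n => ‖a n‖ * r ^ n) atTop (𝓝 0)) :
    ∃ i, IsCentralIndex a r i := by
  classical
  have hmax : ∃ i, ∀ n, ‖a n‖ * r ^ n ≤ ‖a i‖ * r ^ i := by
    by_cases h0 : ∀ n, ‖a n‖ * r ^ n ≤ ‖a 0‖ * r ^ 0
    · exact ⟨0, h0⟩
    obtain ⟨n₀, hn₀⟩ := not_forall.mp h0
    have hpos : 0 < ‖a n₀‖ * r ^ n₀ := (by positivity : (0 : ℝ) ≤ _).trans_lt (not_le.mp hn₀)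
    obtain ⟨N, hN⟩ := eventually_atTop.mp (ha.eventually (gt_mem_nhds hpos))
    obtain ⟨i, -, hi⟩ := (range (max N (n₀ + 1))).exists_max_image (fun n => ‖a n‖ * r ^ n)
      ⟨n₀, by simp⟩
    refine ⟨i, fun n => ?_⟩
    by_cases hn : n < max N (n₀ + 1)
    · exact hi n (mem_range.mpr hn)
    · exact (hN n (by omega)).le.trans (hi n₀ (by simp))
  refine ⟨Nat.find hmax, Nat.find_spec hmax, fun n hn => ?_⟩
  obtain ⟨k, hk⟩ := not_forall.mp (Nat.find_min hmax hn)
  exact (not_le.mp hk).trans_le (Nat.find_spec hmax k)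

variable [IsUltrametricDist K]

theorem IsCentralIndex.antidiagonal_sum (hr : 0 < r) (hu : IsCentralIndex u r i)
    (hv : IsCentralIndex v r j) (hui : u i ≠ 0) (hvj : v j ≠ 0)
    (hw : ∀ n, w n = ∑ x ∈ antidiagonal n, u x.1 * v x.2) :
    IsCentralIndex w r (i + j) ∧
      ‖w (i + j)‖ * r ^ (i + j) = ‖u i‖ * r ^ i * (‖v j‖ * r ^ j) := by
  set B := ‖u i‖ * r ^ i * (‖v j‖ * r ^ j)
  have hB : 0 < B := by
    have := norm_pos_iff.mpr hui
    have := norm_pos_iff.mpr hvj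
    positivity
  have hterm : ∀ (n : ℕ), ∀ x ∈ antidiagonal n,
      ‖u x.1 * v x.2‖ = ‖u x.1‖ * r ^ x.1 * (‖v x.2‖ * r ^ x.2) / r ^ n := by
    intro n x hx
    rw [← mem_antidiagonal.mp hx, pow_add, norm_mul]
    field_simp
  have hle : ∀ (n : ℕ), ∀ x ∈ antidiagonal n, ‖u x.1 * v x.2‖ ≤ B / r ^ n := fun n x hx => by
    rw [hterm n x hx]
    gcongr
    exact mul_le_mul (hu.1 _) (hv.1 _) (by positivity) (by positivity)
  have hlt : ∀ (n : ℕ), ∀ x ∈ antidiagonal n, x.1 < i ∨ x.2 < j → ‖u x.1 * v x.2‖ < B / r ^ n := by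
    intro n x hx hij
    rw [hterm n x hx]
    gcongr
    rcases hij with h | h
    · exact mul_lt_mul_of_lt_of_le_of_nonneg_of_pos (hu.2 _ h) (hv.1 _) (by positivity)
        (by have := norm_pos_iff.mpr hvj; positivity)
    · exact mul_lt_mul_of_le_of_lt_of_nonneg_of_pos (hu.1 _) (hv.2 _ h) (by positivity)
        (by have := norm_pos_iff.mpr hui; positivity)
  have hmax : ‖w (i + j)‖ * r ^ (i + j) = B := by
    have hij : (i, j) ∈ antidiagonal (i + j) := mem_antidiagonal.mpr rfl
    have hrest : ‖∑ x ∈ (antidiagonal (i + j)).erase (i, j), u x.1 * v x.2‖ < ‖u i * v j‖ := by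
      rw [hterm _ _ hij]
      refine norm_sum_lt_of_forall_lt (by positivity) fun x hx => hlt _ x (mem_of_mem_erase hx) ?_
      have := mem_antidiagonal.mp (mem_of_mem_erase hx)
      have := ne_of_mem_erase hx
      by_contra! h
      exact this (Prod.ext (by omega) (by omega))
    rw [hw, ← add_sum_erase _ _ hij, add_comm, norm_add_eq_max_of_norm_ne_norm hrest.ne,
      max_eq_right hrest.le, hterm _ _ hij, div_mul_cancel₀ _ (by positivity)]
  refine ⟨⟨fun n => ?_, fun n hn => ?_⟩, hmax⟩
  · rw [hmax, hw, ← le_div_iff₀ (by positivity)]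
    exact norm_sum_le_of_forall_le_of_nonneg (by positivity) (hle n)
  · rw [hmax, hw, ← lt_div_iff₀ (by positivity)]
    exact norm_sum_lt_of_forall_lt (by positivity) fun x hx =>
      hlt n x hx (by have := mem_antidiagonal.mp hx; omega)

theorem IsCentralIndex.of_tsum_mul_pow_eq_mul [CompleteSpace K] {δ M : ℝ} (hδ : 0 < δ)
    (hw : ∀ n, ‖w n‖ * δ ^ n ≤ M) (hu : IsCentralIndex u δ i) (hv : IsCentralIndex v δ j)
    (hui : u i ≠ 0) (hvj : v j ≠ 0)
    (h : ∀ z : K, ‖z‖ < δ → ∑' n, w n * z ^ n = (∑' n, u n * z ^ n) * ∑' n, v n * z ^ n) :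
    IsCentralIndex w δ (i + j) := by
  obtain ⟨huv, -⟩ := hu.antidiagonal_sum hδ hv hui hvj fun n => rfl
  rwa [eq_of_tsum_mul_pow_eq hδ hw huv.1 fun z hz => by
    rw [h z hz, tsum_mul_pow_mul_tsum_mul_pow hu.1 hv.1 hz]]

end CentralIndex

section Polynomial

open Polynomial

variable {r : ℝ}

lemma isCentralIndex_C (c : K) (r : ℝ) : IsCentralIndex (C c).coeff r 0 := by
  refine ⟨fun n => ?_, fun n hn => absurd hn n.not_lt_zero⟩
  rcases n with _ | n
  · rfl
  · simp [coeff_C]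

lemma isCentralIndex_X_sub_C (hr : 0 < r) (ρ : K) :
    IsCentralIndex (X - C ρ).coeff r (if ‖ρ‖ < r then 1 else 0) ∧
      ‖(X - C ρ).coeff (if ‖ρ‖ < r then 1 else 0)‖ * r ^ (if ‖ρ‖ < r then 1 else 0) =
        max r ‖ρ‖ := by
  have hcoeff : ∀ n, 2 ≤ n → (X - C ρ).coeff n = 0 := fun n hn => by
    rw [coeff_sub, coeff_X, coeff_C, if_neg (by omega), if_neg (by omega), sub_zero]
  split_ifs with h
  · refine ⟨⟨fun n => ?_, fun n hn => ?_⟩, by simp [h.le]⟩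
    · match n with
      | 0 => simpa using h.le
      | 1 => rfl
      | n + 2 => simp [hcoeff (n + 2) (by omega), hr.le]
    · obtain rfl : n = 0 := by omega
      simpa using h
  · refine ⟨⟨fun n => ?_, fun n hn => absurd hn n.not_lt_zero⟩, by simp [not_lt.mp h]⟩
    match n with
    | 0 => rfl
    | 1 => simpa using not_lt.mp h
    | n + 2 => simp [hcoeff (n + 2) (by omega)]

lemma Polynomial.eval_eq_tsum_coeff_mul_pow (P : K[X]) (z : K) :
    P.eval z = ∑' n, P.coeff n * z ^ n := by
  rw [eval_eq_sum_range, tsum_eq_sum fun n hn => ?_]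
  rw [coeff_eq_zero_of_natDegree_lt (by simpa using hn), zero_mul]

lemma prod_map_max_norm_pos (hr : 0 < r) (s : Multiset K) :
    0 < (s.map fun ρ => max r ‖ρ‖).prod :=
  Multiset.prod_pos fun x hx => by
    obtain ⟨ρ, -, rfl⟩ := Multiset.mem_map.mp hx
    exact hr.trans_le (le_max_left _ _)

variable [IsUltrametricDist K]

theorem isCentralIndex_C_mul_prod_X_sub_C (hr : 0 < r) {c : K} (hc : c ≠ 0) (s : Multiset K) :
    IsCentralIndex (C c * (s.map fun ρ => X - C ρ).prod).coeff r (s.filter (‖·‖ < r)).card ∧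
      ‖(C c * (s.map fun ρ => X - C ρ).prod).coeff (s.filter (‖·‖ < r)).card‖ *
        r ^ (s.filter (‖·‖ < r)).card = ‖c‖ * (s.map fun ρ => max r ‖ρ‖).prod := by
  induction s using Multiset.induction_on with
  | empty => simpa using isCentralIndex_C c r
  | cons ρ s ih =>
    obtain ⟨hu, hu_val⟩ := isCentralIndex_X_sub_C hr ρ
    obtain ⟨hv, hv_val⟩ := ih
    have hcard : ((ρ ::ₘ s).filter (‖·‖ < r)).card =
        (if ‖ρ‖ < r then 1 else 0) + (s.filter (‖·‖ < r)).card := by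
      rw [Multiset.filter_cons]
      split_ifs <;> simp [add_comm]
    have hmul : C c * ((ρ ::ₘ s).map fun ρ => X - C ρ).prod =
        (X - C ρ) * (C c * (s.map fun ρ => X - C ρ).prod) := by
      rw [Multiset.map_cons, Multiset.prod_cons, mul_left_comm]
    have hval : ‖c‖ * ((ρ ::ₘ s).map fun ρ => max r ‖ρ‖).prod =
        ‖(X - C ρ).coeff (if ‖ρ‖ < r then 1 else 0)‖ * r ^ (if ‖ρ‖ < r then 1 else 0) *
          (‖(C c * (s.map fun ρ => X - C ρ).prod).coeff (s.filter (‖·‖ < r)).card‖ *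
            r ^ (s.filter (‖·‖ < r)).card) := by
      rw [Multiset.map_cons, Multiset.prod_cons, hu_val, hv_val, mul_left_comm]
    rw [hcard, hmul, hval]
    refine hu.antidiagonal_sum hr hv ?_ ?_ fun n => coeff_mul _ _ n
    · intro h
      rw [h, norm_zero, zero_mul] at hu_val
      exact (hr.trans_le (le_max_left _ _)).ne' hu_val.symm
    · intro h
      rw [h, norm_zero, zero_mul] at hv_val
      exact (mul_pos (norm_pos_iff.mpr hc) (prod_map_max_norm_pos hr s)).ne hv_val

theorem isCentralIndex_C_mul_prod_X_sub_C_of_norm_lt (hr : 0 < r) {c : K} (hc : c ≠ 0) {m : ℕ}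
    (b : Fin m → K) (hb : ∀ i, ‖b i‖ < r) :
    IsCentralIndex (C c * ∏ i, (X - C (b i))).coeff r m ∧
      (C c * ∏ i, (X - C (b i))).coeff m ≠ 0 := by
  have hs : (univ.val.map b).filter (‖·‖ < r) = univ.val.map b :=
    Multiset.filter_eq_self.mpr fun ρ hρ => by
      obtain ⟨i, -, rfl⟩ := Multiset.mem_map.mp hρ
      exact hb i
  have hprod : ∏ i, (X - C (b i)) = ((univ.val.map b).map fun ρ => X - C ρ).prod := by
    rw [Multiset.map_map]
    rfl
  obtain ⟨hcen, hval⟩ := isCentralIndex_C_mul_prod_X_sub_C hr hc (univ.val.map b)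
  rw [hs] at hcen hval
  simp only [Multiset.card_map, card_val, card_univ, Fintype.card_fin] at hcen hval
  rw [hprod]
  refine ⟨hcen, fun h => ?_⟩
  rw [h, norm_zero, zero_mul] at hval
  exact (mul_pos (norm_pos_iff.mpr hc) (prod_map_max_norm_pos hr _)).ne hval

lemma norm_sub_eq_max_of_norm_lt {w ρ : K} (hw : ‖w‖ < r) (hρ : r ≤ ‖ρ‖) :
    ‖w - ρ‖ = max r ‖ρ‖ := by
  rw [max_eq_right hρ, ← norm_neg, neg_sub, sub_eq_add_neg,
    norm_add_eq_max_of_norm_ne_norm (by rw [norm_neg]; linarith), norm_neg,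
    max_eq_left (by linarith)]

theorem exists_isRoot_norm_coeff_mul_norm_sub_pow_le [IsAlgClosed K] {T : K[X]} (hT : T ≠ 0)
    (hr : 0 < r) {μ : ℕ} (hμ : IsCentralIndex T.coeff r μ) (hμ0 : 0 < μ) {w : K}
    (hw : ‖w‖ < r) :
    ∃ w', ‖w'‖ < r ∧ T.IsRoot w' ∧ ‖T.coeff μ‖ * ‖w - w'‖ ^ μ ≤ ‖T.eval w‖ := by
  classical
  set s := T.roots
  set lc := T.leadingCoeff
  have hfac : T = C lc * (s.map fun ρ => X - C ρ).prod := (IsAlgClosed.splits T).eq_prod_roots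
  obtain ⟨hcen, hval⟩ := isCentralIndex_C_mul_prod_X_sub_C hr (leadingCoeff_ne_zero.mpr hT) s
  rw [← hfac] at hcen hval
  have hcard : (s.filter (‖·‖ < r)).card = μ := hcen.unique hμ
  rw [hcard] at hval
  set sin := s.filter (‖·‖ < r)
  set sout := s.filter fun ρ => ¬‖ρ‖ < r
  have hs : sin + sout = s := Multiset.filter_add_not _ s
  obtain ⟨ρ₀, hρ₀, hmin⟩ := Multiset.exists_min_image (fun ρ => ‖w - ρ‖) (s := sin)
    (by rintro h; simp [h] at hcard; omega)
  obtain ⟨hρ₀s, hρ₀r⟩ := Multiset.mem_filter.mp hρ₀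
  refine ⟨ρ₀, hρ₀r, isRoot_of_mem_roots hρ₀s, ?_⟩
  -- Roots outside `B(r)` contribute the same factor `‖ρ‖ = ‖w - ρ‖` to `‖T w‖` and to
  -- `‖T.coeff μ‖`, so `‖T w‖ = ‖T.coeff μ‖ * ∏_{ρ ∈ B(r)} ‖w - ρ‖`.
  set Pout := (sout.map fun ρ => max r ‖ρ‖).prod
  have heval : ‖T.eval w‖ = ‖lc‖ * (sin.map fun ρ => ‖w - ρ‖).prod * Pout := by
    have hout : (sout.map fun ρ => ‖w - ρ‖) = sout.map fun ρ => max r ‖ρ‖ :=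
      Multiset.map_congr rfl fun ρ hρ =>
        norm_sub_eq_max_of_norm_lt hw (not_lt.mp (Multiset.mem_filter.mp hρ).2)
    have hprod := map_multiset_prod (normHom (α := K)) (s.map fun ρ => w - ρ)
    simp only [normHom_apply, Multiset.map_map, Function.comp_def] at hprod
    rw [hfac, eval_mul, eval_C, eval_multiset_prod, norm_mul, Multiset.map_map]
    simp only [Function.comp_def, eval_sub, eval_X, eval_C]
    rw [hprod, ← hs, Multiset.map_add, Multiset.prod_add, hout, mul_assoc]
  have hcoeff : ‖T.coeff μ‖ = ‖lc‖ * Pout := by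
    have hin : (sin.map fun ρ => max r ‖ρ‖) = Multiset.replicate μ r := by
      refine Multiset.eq_replicate.mpr ⟨by rw [Multiset.card_map, hcard], fun x hx => ?_⟩
      obtain ⟨ρ, hρ, rfl⟩ := Multiset.mem_map.mp hx
      exact max_eq_left (Multiset.mem_filter.mp hρ).2.le
    rw [← hs, Multiset.map_add, Multiset.prod_add, hin, Multiset.prod_replicate] at hval
    have : r ^ μ ≠ 0 := by positivity
    field_simp at hval ⊢
    linarith
  have hprod : ‖w - ρ₀‖ ^ μ ≤ (sin.map fun ρ => ‖w - ρ‖).prod := by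
    have := Multiset.prod_map_le_prod_map₀ (s := sin) (fun _ => ‖w - ρ₀‖) (fun ρ => ‖w - ρ‖)
      (fun _ _ => norm_nonneg _) hmin
    rwa [Multiset.map_const', Multiset.prod_replicate, hcard] at this
  have hPout : 0 ≤ Pout := Multiset.prod_map_nonneg fun ρ _ => hr.le.trans (le_max_left _ _)
  rw [heval, hcoeff, mul_right_comm]
  gcongr

end Polynomial

section Zeros

open Polynomial

lemma Filter.Tendsto.of_pow_nhds_zero {ι : Type*} {l : Filter ι} {x : ι → ℝ}
    (hx : ∀ j, 0 ≤ x j) {μ : ℕ} (hμ : μ ≠ 0) (h : Tendsto (fun j => x j ^ μ) l (𝓝 0)) :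
    Tendsto x l (𝓝 0) := by
  simpa [Real.zero_rpow (inv_ne_zero (Nat.cast_ne_zero.mpr hμ)),
    Real.pow_rpow_inv_natCast (hx _) hμ] using
    h.rpow_const (p := (μ : ℝ)⁻¹) (Or.inr (by positivity))

variable {c : ℕ → K} {r δ M : ℝ}

lemma eval_trunc_mk_s3 (c : ℕ → K) (N : ℕ) (z : K) :
    (PowerSeries.trunc N (PowerSeries.mk c)).eval z = ∑ n ∈ range N, c n * z ^ n := by
  induction N with
  | zero => simp
  | succ N ih =>
    rw [PowerSeries.trunc_succ, eval_add, eval_monomial, ih, sum_range_succ, PowerSeries.coeff_mk]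

lemma IsCentralIndex.trunc (hr : 0 ≤ r) {μ N : ℕ} (hμ : IsCentralIndex c r μ) (hN : μ < N) :
    IsCentralIndex (PowerSeries.trunc N (PowerSeries.mk c)).coeff r μ := by
  simp only [IsCentralIndex, PowerSeries.coeff_trunc, PowerSeries.coeff_mk, if_pos hN]
  refine ⟨fun n => ?_, fun n hn => by simpa [if_pos (hn.trans hN)] using hμ.2 n hn⟩
  split_ifs
  · exact hμ.1 n
  · simpa using (by positivity : 0 ≤ ‖c μ‖ * r ^ μ)

lemma norm_mul_pow_le (a : K) {z : K} (hz : ‖z‖ ≤ r) (n : ℕ) : ‖a * z ^ n‖ ≤ ‖a‖ * r ^ n := by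
  rw [norm_mul, norm_pow]
  exact mul_le_mul_of_nonneg_left (pow_le_pow_left₀ (norm_nonneg z) hz n) (norm_nonneg a)

variable [IsUltrametricDist K]

theorem exists_seq_sum_range_eq_zero [IsAlgClosed K] (hr : 0 < r) {μ : ℕ}
    (hμ : IsCentralIndex c r μ) (hμ0 : 0 < μ) :
    ∃ z : ℕ → K, ∀ j, ‖z j‖ < r ∧ ∑ n ∈ range (j + (μ + 1)), c n * z j ^ n = 0 ∧
      ‖c μ‖ * ‖z (j + 1) - z j‖ ^ μ ≤ ‖c (j + (μ + 1)) * z j ^ (j + (μ + 1))‖ := by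
  set T : ℕ → K[X] := fun j => PowerSeries.trunc (j + (μ + 1)) (PowerSeries.mk c)
  have hTμ : ∀ j, IsCentralIndex (T j).coeff r μ := fun j => hμ.trunc hr.le (by omega)
  have hTcoeff : ∀ j, (T j).coeff μ = c μ := fun j => by
    simp [T, PowerSeries.coeff_trunc, show μ < j + (μ + 1) by omega]
  have hstep : ∀ j w, ‖w‖ < r →
      ∃ w', ‖w'‖ < r ∧ (T j).IsRoot w' ∧ ‖c μ‖ * ‖w - w'‖ ^ μ ≤ ‖(T j).eval w‖ := by
    intro j w hw
    have hT : T j ≠ 0 := fun h => hμ.ne_zero hμ0 (by rw [← hTcoeff j, h, coeff_zero])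
    simpa [hTcoeff] using exists_isRoot_norm_coeff_mul_norm_sub_pow_le hT hr (hTμ j) hμ0 hw
  choose! next hnext using hstep
  let z : ℕ → K := fun j => Nat.rec (next 0 0) (fun j w => next (j + 1) w) j
  have hz : ∀ j, ‖z j‖ < r ∧ (T j).IsRoot (z j) := by
    intro j
    induction j with
    | zero => exact (hnext 0 0 (by simpa using hr)).imp_right And.left
    | succ j ih => exact (hnext (j + 1) (z j) ih.1).imp_right And.left
  refine ⟨z, fun j => ⟨(hz j).1, by simpa [T, eval_trunc_mk_s3] using (hz j).2, ?_⟩⟩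
  have hle := (hnext (j + 1) (z j) (hz j).1).2.2
  have hroot := (hz j).2
  simp only [T, IsRoot, eval_trunc_mk_s3] at hle hroot
  rwa [show j + 1 + (μ + 1) = j + (μ + 1) + 1 by omega, sum_range_succ, hroot, zero_add,
    norm_sub_rev] at hle

lemma norm_tsum_mul_pow_sub_sum_range_le {z : K} (hsum : Summable fun n => c n * z ^ n)
    (hz : ‖z‖ ≤ r) {N : ℕ} {η : ℝ} (hη : 0 ≤ η) (h : ∀ n, N ≤ n → ‖c n‖ * r ^ n ≤ η) :
    ‖∑' n, c n * z ^ n - ∑ n ∈ range N, c n * z ^ n‖ ≤ η := by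
  rw [← hsum.sum_add_tsum_nat_add N, add_sub_cancel_left]
  exact norm_tsum_le_of_forall_le_of_nonneg hη fun n =>
    (norm_mul_pow_le _ hz _).trans (h _ (by omega))

variable [CompleteSpace K]

lemma exists_tsum_mul_pow_eq_zero_of_tendsto (hc : ∀ n, ‖c n‖ * δ ^ n ≤ M) (hrδ : r < δ)
    {z : ℕ → K} (hz : ∀ j, ‖z j‖ ≤ r) (hdiff : Tendsto (fun j => z (j + 1) - z j) atTop (𝓝 0))
    (hval : Tendsto (fun j => ∑' n, c n * z j ^ n) atTop (𝓝 0)) :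
    ∃ L : K, ‖L‖ < δ ∧ ∑' n, c n * L ^ n = 0 := by
  obtain ⟨L, hL⟩ := cauchySeq_tendsto_of_complete
    (NonarchimedeanAddGroup.cauchySeq_of_tendsto_sub_nhds_zero hdiff)
  have hLδ : ‖L‖ < δ := (le_of_tendsto hL.norm (Eventually.of_forall hz)).trans_lt hrδ
  refine ⟨L, hLδ, tendsto_nhds_unique ?_ hval⟩
  exact ((continuousOn_tsum_mul_pow hc).continuousAt
    (Metric.isOpen_ball.mem_nhds (mem_ball_zero_iff.mpr hLδ))).tendsto.comp hL

theorem exists_tsum_mul_pow_eq_zero_of_isCentralIndex [IsAlgClosed K]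
    (hc : ∀ n, ‖c n‖ * δ ^ n ≤ M) (hr : 0 < r) (hrδ : r < δ) {μ : ℕ}
    (hμ : IsCentralIndex c r μ) (hμ0 : 0 < μ) :
    ∃ L : K, ‖L‖ < δ ∧ ∑' n, c n * L ^ n = 0 := by
  have hδ : 0 < δ := hr.trans hrδ
  have hM : 0 ≤ M := (by positivity : (0 : ℝ) ≤ ‖c 0‖ * δ ^ 0).trans (hc 0)
  have hgeom : ∀ n, ‖c n‖ * r ^ n ≤ M * (r / δ) ^ n := fun n => by
    rw [div_pow, ← mul_div_assoc, le_div_iff₀ (by positivity), mul_assoc, ← mul_pow,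
      mul_comm r, mul_pow, ← mul_assoc]
    exact mul_le_mul_of_nonneg_right (hc n) (by positivity)
  have hlim : Tendsto (fun j : ℕ => M * (r / δ) ^ (j + (μ + 1))) atTop (𝓝 0) := by
    refine (tendsto_add_atTop_iff_nat (f := fun n => M * (r / δ) ^ n) (μ + 1)).mpr ?_
    simpa using (tendsto_pow_atTop_nhds_zero_of_lt_one (by positivity)
      ((div_lt_one hδ).mpr hrδ)).const_mul M
  obtain ⟨z, hz⟩ := exists_seq_sum_range_eq_zero hr hμ hμ0
  refine exists_tsum_mul_pow_eq_zero_of_tendsto hc hrδ (fun j => (hz j).1.le) ?_ ?_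
  · have hcμ : 0 < ‖c μ‖ := norm_pos_iff.mpr (hμ.ne_zero hμ0)
    refine tendsto_zero_iff_norm_tendsto_zero.mpr
      (Tendsto.of_pow_nhds_zero (fun _ => norm_nonneg _) hμ0.ne' ?_)
    refine squeeze_zero (fun _ => by positivity) (fun j => ?_) (hlim.div_const ‖c μ‖ |>.trans ?_)
    · rw [le_div_iff₀ hcμ, mul_comm]
      exact (hz j).2.2.trans ((norm_mul_pow_le _ (hz j).1.le _).trans (hgeom _))
    · simp
  · refine squeeze_zero_norm (fun j => ?_) hlim
    have h := norm_tsum_mul_pow_sub_sum_range_le (summable_mul_pow hc ((hz j).1.trans hrδ))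
      (hz j).1.le (N := j + (μ + 1)) (by positivity) fun n hn => (hgeom n).trans
        (mul_le_mul_of_nonneg_left (pow_le_pow_of_le_one (by positivity)
          ((div_le_one hδ).mpr hrδ.le) hn) hM)
    rwa [(hz j).2.1, sub_zero] at h

theorem isCentralIndex_zero_of_tsum_mul_pow_ne_zero [IsAlgClosed K] (hδ : 0 < δ)
    (hc : Tendsto (fun n => ‖c n‖ * δ ^ n) atTop (𝓝 0))
    (hg : ∀ z : K, ‖z‖ < δ → ∑' n, c n * z ^ n ≠ 0) : IsCentralIndex c δ 0 := by
  refine ⟨fun n => ?_, fun n hn => absurd hn n.not_lt_zero⟩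
  by_contra! h
  obtain ⟨M, hM⟩ := hc.bddAbove_range
  -- At a slightly smaller radius `r` the central index is still positive.
  obtain ⟨r, hcr, hr0, hrδ⟩ : ∃ r, ‖c 0‖ < ‖c n‖ * r ^ n ∧ 0 < r ∧ r < δ :=
    ((((continuous_const.mul (continuous_pow n)).tendsto δ).mono_left nhdsWithin_le_nhds).eventually
      (lt_mem_nhds (by simpa using h))).and (Ioo_mem_nhdsLT hδ) |>.exists
  have hc_r : Tendsto (fun n => ‖c n‖ * r ^ n) atTop (𝓝 0) :=
    squeeze_zero (fun _ => by positivity) (fun n => by gcongr) hc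
  obtain ⟨μ, hμ⟩ := exists_isCentralIndex hc_r
  have hμ0 : 0 < μ := Nat.pos_of_ne_zero fun h0 => by
    have := hcr.trans_le (hμ.1 n)
    simp [h0] at this
  obtain ⟨L, hL, hgL⟩ := exists_tsum_mul_pow_eq_zero_of_isCentralIndex
    (fun n => hM (Set.mem_range_self n)) hr0 hrδ hμ hμ0
  exact hg L hL hgL

end Zeros

lemma gaussNorm_eq_iSup_fin {a : ℕ → K} {r : ℝ} {i k : ℕ}
    (ha : ∀ n, ‖a n‖ * r ^ n ≤ ‖a i‖ * r ^ i) (hik : i < k) :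
    gaussNorm a r = ⨆ n : Fin k, ‖a n‖ * r ^ (n : ℕ) := by
  have : Nonempty (Fin k) := ⟨⟨i, hik⟩⟩
  rw [gaussNorm, ciSup_eq_of_forall_le_of_forall_lt_exists_gt ha fun x hx => ⟨i, hx⟩]
  exact (ciSup_eq_of_forall_le_of_forall_lt_exists_gt (fun n : Fin k => ha n)
    fun x hx => ⟨⟨i, hik⟩, hx⟩).symm

end

theorem statement3_general
    -- `Cp` is a model of `ℂ_p`:
    (Cp : Type*) [NontriviallyNormedField Cp]
    [IsUltrametricDist Cp] [CompleteSpace Cp] [IsAlgClosed Cp]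
    -- the radius:
    (δ : ℝ) (hδ : 0 < δ)
    -- `f` is a nonzero function analytic on the closed ball of radius `δ`,
    -- with coefficient sequence `a`:
    (a : ℕ → Cp) (ha : Tendsto (fun n => ‖a n‖ * δ ^ n) atTop (nhds 0))
    (hf0 : ∃ n, a n ≠ 0)
    -- `k` is a positive integer:
    (k : ℕ) (hk : 0 < k)
    -- `f` has at most `k - 1` zeros (with multiplicity) in the open ball
    -- `B(δ)`, in the sense that `f(z) = α·(z - b 1)⋯(z - b m)·g(z)` with
    -- `m ≤ k - 1`, all `b i ∈ B(δ)`, and `g` analytic on the closed ball of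
    -- radius `δ` with no zero in `B(δ)`:
    (m : ℕ) (hm : m ≤ k - 1) (α : Cp) (b : Fin m → Cp) (hb : ∀ i, ‖b i‖ < δ)
    (c : ℕ → Cp) (hc : Tendsto (fun n => ‖c n‖ * δ ^ n) atTop (nhds 0))
    (hg : ∀ z : Cp, ‖z‖ < δ → (∑' n, c n * z ^ n) ≠ 0)
    (hfactor : ∀ z : Cp, ‖z‖ ≤ δ →
      ∑' n, a n * z ^ n = α * (∏ i, (z - b i)) * ∑' n, c n * z ^ n) :
    -- conclusion: `|f|_δ = max_{0 ≤ n ≤ k-1} ‖a n‖ · δ ^ n`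
    gaussNorm a δ = ⨆ n : Fin k, ‖a (n : ℕ)‖ * δ ^ (n : ℕ) := by
  obtain ⟨Ma, hMa⟩ := ha.bddAbove_range
  replace hMa : ∀ n, ‖a n‖ * δ ^ n ≤ Ma := fun n => hMa ⟨n, rfl⟩
  have hα : α ≠ 0 := by
    rintro rfl
    obtain ⟨n, hn⟩ := hf0
    exact hn (congrFun (eq_of_tsum_mul_pow_eq hδ hMa (b := 0) (M' := 0) (by simp)
      fun z hz => by simp [hfactor z hz.le]) n)
  obtain ⟨hP, hPm⟩ := isCentralIndex_C_mul_prod_X_sub_C_of_norm_lt hδ hα b hb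
  have hc0 := isCentralIndex_zero_of_tsum_mul_pow_ne_zero hδ hc hg
  have hc0ne : c 0 ≠ 0 := by
    have := hg 0 (by simpa using hδ)
    rwa [tsum_eq_single 0 fun n hn => by simp [hn], pow_zero, mul_one] at this
  have ha_m := hP.of_tsum_mul_pow_eq_mul hδ hMa hc0 hPm hc0ne fun z hz => by
    rw [hfactor z hz.le, ← Polynomial.eval_eq_tsum_coeff_mul_pow]
    simp [Polynomial.eval_prod]
  exact gaussNorm_eq_iSup_fin ha_m.1 (by omega)

theorem statement3
    -- `Cp` is a model of `ℂ_p`: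
    (p : ℕ) [Fact p.Prime] (Cp : Type*) [NontriviallyNormedField Cp]
    [IsUltrametricDist Cp] [CompleteSpace Cp] [IsAlgClosed Cp]
    (hpCp : ‖(p : Cp)‖ = (p : ℝ)⁻¹)
    -- the radius:
    (δ : ℝ) (hδ : 0 < δ)
    -- `f` is a nonzero function analytic on the closed ball of radius `δ`,
    -- with coefficient sequence `a`:
    (a : ℕ → Cp) (ha : Tendsto (fun n => ‖a n‖ * δ ^ n) atTop (nhds 0))
    (hf0 : ∃ n, a n ≠ 0)
    -- `k` is a positive integer:
    (k : ℕ) (hk : 0 < k)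
    -- `f` has at most `k - 1` zeros (with multiplicity) in the open ball
    -- `B(δ)`, in the sense that `f(z) = α·(z - b 1)⋯(z - b m)·g(z)` with
    -- `m ≤ k - 1`, all `b i ∈ B(δ)`, and `g` analytic on the closed ball of
    -- radius `δ` with no zero in `B(δ)`:
    (m : ℕ) (hm : m ≤ k - 1) (α : Cp) (b : Fin m → Cp) (hb : ∀ i, ‖b i‖ < δ)
    (c : ℕ → Cp) (hc : Tendsto (fun n => ‖c n‖ * δ ^ n) atTop (nhds 0))
    (hg : ∀ z : Cp, ‖z‖ < δ → (∑' n, c n * z ^ n) ≠ 0)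
    (hfactor : ∀ z : Cp, ‖z‖ ≤ δ →
      ∑' n, a n * z ^ n = α * (∏ i, (z - b i)) * ∑' n, c n * z ^ n) :
    -- conclusion: `|f|_δ = max_{0 ≤ n ≤ k-1} ‖a n‖ · δ ^ n`
    gaussNorm a δ = ⨆ n : Fin k, ‖a (n : ℕ)‖ * δ ^ (n : ℕ) :=
  statement3_general Cp δ hδ a ha hf0 k hk m hm α b hb c hc hg hfactor
end
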